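/- arXiv:1206.1975 — 7 statements merged into one kernel-verified Lean document; each statement's English description precedes it below -/
import Mathlib

section
/- Let A and B be n-by-n weighted shift matrices (n ≥ 3) with weights a_1, …, a_n and b_1, …, b_n respectively, and suppose |a_j| = |b_j| for all 1 ≤ j ≤ n. Then for every integer k with 0 ≤ k < n, the matrix A is unitarily equivalent to e^{iψ_k}·B, where ψ_k = (2kπ + Σ_{j=1}^n (arg a_j − arg b_j))/n and arg denotes the principal argument (with arg 0 = 0). -/
/-!
Conjugating a weighted shift by a diagonal unitary `diag(d)` multiplies its weight `a_i` by
`conj(d_i) d_{i+1}`. Hence any unimodular phases `u_i` with `∏ u_i = 1` can be put on the weights: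
take `d_i = u_0 ⋯ u_{i-1}`, the product closing up around the cycle. The phases
`u_i = e^{iψ_k} e^{i(arg b_i - arg a_i)}` turn `a` into `e^{iψ_k} b` because `|a_i| = |b_i|`, and
`∏ u_i = e^{i(n ψ_k - Σ (arg a_j - arg b_j))} = e^{2kπi} = 1`.
-/

open Matrix

/-- The n-by-n weighted shift matrix with weights `a 0, …, a (n-1)`
(representing `a_1, …, a_n`): the `(i, i+1)` entry is `a i` (cyclically). -/
def wsMatrix {n : ℕ} (a : Fin n → ℂ) : Matrix (Fin n) (Fin n) ℂ :=
  fun i j => if (j : ℕ) = ((i : ℕ) + 1) % n then a i else 0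

/-- Two square complex matrices are unitarily equivalent if `B = U* A U`
for some unitary `U`. -/
def UnitarilyEquiv {n : ℕ} (A B : Matrix (Fin n) (Fin n) ℂ) : Prop :=
  ∃ U : Matrix (Fin n) (Fin n) ℂ, U ∈ Matrix.unitaryGroup (Fin n) ℂ ∧ B = Uᴴ * A * U

theorem Circle.exp_sum {ι : Type*} (s : Finset ι) (f : ι → ℝ) :
    Circle.exp (∑ i ∈ s, f i) = ∏ i ∈ s, Circle.exp (f i) := by
  induction s using Finset.cons_induction <;> simp_all [Circle.exp_add]

theorem Circle.star_coe_mul_self (z : Circle) : star (z : ℂ) * z = 1 := by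
  rw [Complex.star_def, ← coe_inv_eq_conj, ← coe_mul, inv_mul_cancel, coe_one]

theorem Complex.mul_exp_arg_sub_of_norm_eq {a b : ℂ} (h : ‖a‖ = ‖b‖) :
    a * exp (((b.arg - a.arg : ℝ) : ℂ) * I) = b := by
  nth_rw 1 [← norm_mul_exp_arg_mul_I a]
  rw [mul_assoc, ← exp_add, h, ofReal_sub, ← add_mul, add_sub_cancel, norm_mul_exp_arg_mul_I]

theorem Fin.partialProd_last {M : Type*} [CommMonoid M] {n : ℕ} (f : Fin n → M) :
    partialProd f (last n) = ∏ i, f i := by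
  rw [partialProd, val_last, List.take_of_length_le (by simp), List.prod_ofFn]

theorem Fin.partialProd_castSucc_finRotate {M : Type*} [CommMonoid M] {n : ℕ} {u : Fin n → M}
    (hu : ∏ i, u i = 1) (i : Fin n) :
    partialProd u (finRotate n i).castSucc = partialProd u i.castSucc * u i := by
  obtain _ | n := n
  · exact i.elim0
  rw [← partialProd_succ]
  by_cases hi : i = last n
  · subst hi
    rw [finRotate_last, castSucc_zero, partialProd_zero, succ_last, partialProd_last, hu]
  · congr 1
    ext
    rw [val_castSucc, coe_finRotate_of_ne_last hi, val_succ]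

theorem val_eq_succ_mod_iff_eq_finRotate {n : ℕ} (i j : Fin n) :
    (j : ℕ) = ((i : ℕ) + 1) % n ↔ j = finRotate n i := by
  obtain _ | n := n
  · exact i.elim0
  rw [Fin.ext_iff, coe_finRotate]
  split_ifs with hi
  · simp [hi]
  · rw [Nat.mod_eq_of_lt (Nat.succ_lt_succ (Fin.val_lt_last hi))]

theorem wsMatrix_apply {n : ℕ} (a : Fin n → ℂ) (i j : Fin n) :
    wsMatrix a i j = if j = finRotate n i then a i else 0 := by
  simp only [wsMatrix, val_eq_succ_mod_iff_eq_finRotate]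

theorem smul_wsMatrix {n : ℕ} (c : ℂ) (a : Fin n → ℂ) : c • wsMatrix a = wsMatrix (c • a) := by
  ext i j
  simp [wsMatrix_apply]

theorem diagonal_coe_circle_mem_unitaryGroup {ι : Type*} [Fintype ι] [DecidableEq ι]
    (d : ι → Circle) : diagonal (fun i => (d i : ℂ)) ∈ unitaryGroup ι ℂ := by
  rw [mem_unitaryGroup_iff', star_eq_conjTranspose, diagonal_conjTranspose, diagonal_mul_diagonal,
    ← diagonal_one]
  congr 1
  ext i
  exact Circle.star_coe_mul_self (d i)

theorem conjTranspose_diagonal_mul_wsMatrix_mul_diagonal {n : ℕ} (d a : Fin n → ℂ) :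
    (diagonal d)ᴴ * wsMatrix a * diagonal d =
      wsMatrix fun i => star (d i) * a i * d (finRotate n i) := by
  ext i j
  rw [diagonal_conjTranspose, mul_diagonal, diagonal_mul, wsMatrix_apply, wsMatrix_apply]
  split_ifs with hj
  · rw [hj]; rfl
  · simp

theorem unitarilyEquiv_wsMatrix_mul_circle {n : ℕ} (a : Fin n → ℂ) {u : Fin n → Circle}
    (hu : ∏ i, u i = 1) : UnitarilyEquiv (wsMatrix a) (wsMatrix fun i => a i * u i) := by
  refine ⟨diagonal fun i => ((Fin.partialProd u i.castSucc : Circle) : ℂ),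
    diagonal_coe_circle_mem_unitaryGroup _, ?_⟩
  rw [conjTranspose_diagonal_mul_wsMatrix_mul_diagonal]
  congr 1
  ext i
  rw [Fin.partialProd_castSucc_finRotate hu, Circle.coe_mul]
  linear_combination -(a i * u i) * Circle.star_coe_mul_self (Fin.partialProd u i.castSucc)

theorem stmt1_general (n : ℕ) (a b : Fin n → ℂ)
    (hab : ∀ j, ‖a j‖ = ‖b j‖)
    (k : ℕ) :
    UnitarilyEquiv (wsMatrix a)
      (Complex.exp
          ((((2 * k * Real.pi + ∑ j, (Complex.arg (a j) - Complex.arg (b j))) / n : ℝ) : ℂ) *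
            Complex.I) • wsMatrix b) := by
  set ψ : ℝ := (2 * k * Real.pi + ∑ j, (Complex.arg (a j) - Complex.arg (b j))) / n with hψ
  set u : Fin n → Circle := fun j => Circle.exp (ψ + ((b j).arg - (a j).arg))
  have hu : ∏ j, u j = 1 := by
    obtain rfl | hn := eq_or_ne n 0
    · simp
    have hsum : ∑ j, (ψ + ((b j).arg - (a j).arg)) = (k : ℤ) * (2 * Real.pi) := by
      rw [Finset.sum_add_distrib, Finset.sum_const, Finset.card_univ, Fintype.card_fin,
        nsmul_eq_mul, hψ, mul_div_cancel₀ _ (Nat.cast_ne_zero.2 hn)]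
      simp only [Finset.sum_sub_distrib]
      push_cast
      ring
    rw [← Circle.exp_sum, hsum, Circle.exp_int_mul_two_pi]
  have hbu : (fun j => a j * u j) = Complex.exp (ψ * Complex.I) • b := by
    ext j
    calc a j * Circle.exp (ψ + ((b j).arg - (a j).arg))
        = Complex.exp (ψ * Complex.I) *
            (a j * Complex.exp (((b j).arg - (a j).arg : ℝ) * Complex.I)) := by
          rw [Circle.coe_exp, Complex.ofReal_add, add_mul, Complex.exp_add]
          ring
      _ = Complex.exp (ψ * Complex.I) * b j := by
          rw [Complex.mul_exp_arg_sub_of_norm_eq (hab j)]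
  rw [smul_wsMatrix, ← hbu]
  exact unitarilyEquiv_wsMatrix_mul_circle a hu

theorem stmt1 (n : ℕ) (hn : 3 ≤ n) (a b : Fin n → ℂ)
    (hab : ∀ j, ‖a j‖ = ‖b j‖)
    (k : ℕ) (hk : k < n) :
    UnitarilyEquiv (wsMatrix a)
      (Complex.exp
          ((((2 * k * Real.pi + ∑ j, (Complex.arg (a j) - Complex.arg (b j))) / n : ℝ) : ℂ) *
            Complex.I) • wsMatrix b) :=
  stmt1_general n a b hab k
end

section
/- Let A and B be n-by-n weighted shift matrices (n ≥ 3) with weights a_1, …, a_n and b_1, …, b_n respectively. If A is unitarily equivalent to B, then the multisets {|a_1|, |a_2|, …, |a_n|} and {|b_1|, |b_2|, …, |b_n|} are equal (counting multiplicities); equivalently, there is a permutation σ of {1, …, n} with |b_j| = |a_{σ(j)}| for all j. -/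
/-!
The weighted shift with weights `a` is `diagonal a` times the permutation matrix of the cyclic
shift, so `A Aᴴ = diagonal (|a_j|²)`. If `B = Uᴴ A U` with `U` unitary then `B Bᴴ = Uᴴ (A Aᴴ) U`,
hence `A Aᴴ` and `B Bᴴ` have the same characteristic polynomial, and comparing its roots gives
`{|a_j|²} = {|b_j|²}` as multisets.
-/

open Matrix

open Polynomial

theorem Fintype.exists_equiv_of_map_univ_val_eq {α β γ : Type*} [Fintype α] [Fintype β]
    [DecidableEq γ] {f : α → γ} {g : β → γ}
    (h : Finset.univ.val.map f = Finset.univ.val.map g) : ∃ e : α ≃ β, ∀ a, g (e a) = f a := by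
  classical
  refine ⟨Equiv.ofPreimageEquiv fun c => Fintype.equivOfCardEq ?_, Equiv.ofPreimageEquiv_map _⟩
  have hc := congrArg (Multiset.count c) h
  simp only [Multiset.count_map] at hc
  simpa [Fintype.card_subtype, Finset.card, Finset.filter_val, eq_comm] using hc

theorem Matrix.roots_charpoly_diagonal {n R : Type*} [Fintype n] [DecidableEq n] [CommRing R]
    [IsDomain R] (d : n → R) : (diagonal d).charpoly.roots = Finset.univ.val.map d := by
  simpa only [Multiset.map_map, Function.comp_def, Finset.prod_map_val, ← charpoly_diagonal]
    using roots_multiset_prod_X_sub_C (Finset.univ.val.map d)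

theorem Matrix.charpoly_unitary_conj {n R : Type*} [Fintype n] [DecidableEq n] [CommRing R]
    [StarRing R] {U : Matrix n n R} (hU : U ∈ unitaryGroup n R) (M : Matrix n n R) :
    (Uᴴ * M * U).charpoly = M.charpoly := by
  have hUU : U * Uᴴ = 1 := mem_unitaryGroup_iff.mp hU
  rw [mul_assoc, charpoly_mul_comm, mul_assoc, hUU, mul_one]

theorem Matrix.diagonal_mul_permMatrix_mul_conjTranspose {n R : Type*} [Fintype n] [DecidableEq n]
    [CommRing R] [StarRing R] (d : n → R) (σ : Equiv.Perm n) :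
    diagonal d * σ.permMatrix R * (diagonal d * σ.permMatrix R)ᴴ
      = diagonal fun i => d i * star (d i) := by
  rw [conjTranspose_mul, conjTranspose_permMatrix, diagonal_conjTranspose, mul_assoc,
    ← mul_assoc (σ.permMatrix R), ← permMatrix_mul, inv_mul_cancel, permMatrix_one, one_mul,
    diagonal_mul_diagonal]
  rfl

theorem wsMatrix_eq_diagonal_mul_permMatrix {n : ℕ} (a : Fin n → ℂ) :
    wsMatrix a = diagonal a * (finRotate n).permMatrix ℂ := by
  ext i j
  simp only [wsMatrix, diagonal_mul, PEquiv.toMatrix_apply, Equiv.toPEquiv_apply, finRotate_apply,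
    Option.mem_def, eq_comm, Option.some.injEq, Fin.ext_iff, Fin.val_add, Fin.coe_ofNat_eq_mod,
    Nat.add_mod_mod, mul_ite, mul_one, mul_zero]

theorem UnitarilyEquiv.mul_conjTranspose {n : ℕ} {A B : Matrix (Fin n) (Fin n) ℂ}
    (h : UnitarilyEquiv A B) : UnitarilyEquiv (A * Aᴴ) (B * Bᴴ) := by
  obtain ⟨U, hU, rfl⟩ := h
  refine ⟨U, hU, ?_⟩
  have hUU : U * Uᴴ = 1 := mem_unitaryGroup_iff.mp hU
  simp only [conjTranspose_mul, conjTranspose_conjTranspose, mul_assoc]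
  rw [← mul_assoc U, hUU, one_mul]

theorem UnitarilyEquiv.charpoly_eq {n : ℕ} {A B : Matrix (Fin n) (Fin n) ℂ}
    (h : UnitarilyEquiv A B) : B.charpoly = A.charpoly := by
  obtain ⟨U, hU, rfl⟩ := h
  exact charpoly_unitary_conj hU A

theorem wsMatrix_mul_conjTranspose {n : ℕ} (a : Fin n → ℂ) :
    wsMatrix a * (wsMatrix a)ᴴ = diagonal fun i => ((‖a i‖ ^ 2 : ℝ) : ℂ) := by
  simp only [wsMatrix_eq_diagonal_mul_permMatrix, diagonal_mul_permMatrix_mul_conjTranspose]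
  push_cast
  exact congrArg diagonal (funext fun i => Complex.mul_conj' (a i))

theorem stmt2_general (n : ℕ) (a b : Fin n → ℂ)
    (h : UnitarilyEquiv (wsMatrix a) (wsMatrix b)) :
    ∃ σ : Equiv.Perm (Fin n), ∀ j, ‖b j‖ = ‖a (σ j)‖ := by
  have hroots := congrArg roots h.mul_conjTranspose.charpoly_eq
  simp only [wsMatrix_mul_conjTranspose, roots_charpoly_diagonal] at hroots
  have hsq : Finset.univ.val.map (fun j => ‖b j‖ ^ 2) = Finset.univ.val.map (fun i => ‖a i‖ ^ 2) :=
    Multiset.map_injective Complex.ofReal_injective <| by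
      simpa only [Multiset.map_map, Function.comp_def] using hroots
  obtain ⟨σ, hσ⟩ := Fintype.exists_equiv_of_map_univ_val_eq hsq
  exact ⟨σ, fun j => (sq_eq_sq₀ (norm_nonneg _) (norm_nonneg _)).mp (hσ j).symm⟩

theorem stmt2 (n : ℕ) (hn : 3 ≤ n) (a b : Fin n → ℂ)
    (h : UnitarilyEquiv (wsMatrix a) (wsMatrix b)) :
    ∃ σ : Equiv.Perm (Fin n), ∀ j, ‖b j‖ = ‖a (σ j)‖ :=
  stmt2_general n a b h
end

section
/- Let A be the m-by-m weighted shift matrix with weights a_1, …, a_{m−1}, 0 and B the n-by-n weighted shift matrix with weights b_1, …, b_{n−1}, 0, where all a_i and b_j are strictly positive real numbers. Suppose U is an m-by-n complex matrix such that A^k·U = U·B^k and (A*)^k·U = U·(B*)^k for every integer k ≥ 0. If m ≠ n, then U = 0. -/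
open Matrix

section Aux

lemma ws_succ_mod_inj {n j k : ℕ} (hj : j < n) (hk : k < n) (h : (j+1) % n = (k+1) % n) :
    j = k := by
  have h1 : (j+1) % n = if j+1 = n then 0 else j+1 := by
    split
    · simp_all
    · exact Nat.mod_eq_of_lt (by omega)
  have h2 : (k+1) % n = if k+1 = n then 0 else k+1 := by
    split
    · simp_all
    · exact Nat.mod_eq_of_lt (by omega)
  rw [h1, h2] at h
  split at h <;> split at h <;> omega

variable {m n : ℕ}

/-- Entry of `wsMatrix a * X`. -/
lemma wsMul (a : Fin m → ℂ) (X : Matrix (Fin m) (Fin n) ℂ) (i : ℕ) (hi : i < m) (j : Fin n) :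
    (wsMatrix a * X) ⟨i, hi⟩ j
      = a ⟨i, hi⟩ * X ⟨(i+1) % m, Nat.mod_lt _ (by omega)⟩ j := by
  rw [Matrix.mul_apply, Finset.sum_eq_single (⟨(i+1) % m, Nat.mod_lt _ (by omega)⟩ : Fin m)]
  · simp [wsMatrix]
  · intro k _ hk
    have hne : ¬ ((k:ℕ) = (i+1) % m) := fun h => hk (Fin.ext h)
    simp [wsMatrix, hne]
  · intro h; exact absurd (Finset.mem_univ _) h

/-- Entry of `X * wsMatrix b` at a successor column. -/
lemma mulWs (b : Fin n → ℂ) (X : Matrix (Fin m) (Fin n) ℂ) (i : Fin m) (j : ℕ) (hj : j < n) :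
    (X * wsMatrix b) i ⟨(j+1) % n, Nat.mod_lt _ (by omega)⟩ = X i ⟨j, hj⟩ * b ⟨j, hj⟩ := by
  rw [Matrix.mul_apply, Finset.sum_eq_single (⟨j, hj⟩ : Fin n)]
  · simp [wsMatrix]
  · intro k _ hk
    have hne : ¬ ((j+1) % n = ((k:ℕ)+1) % n) := fun h =>
      hk (Fin.ext (ws_succ_mod_inj hj k.isLt h).symm)
    simp [wsMatrix, hne]
  · intro h; exact absurd (Finset.mem_univ _) h

/-- Entry of `(wsMatrix a)ᴴ * X` at a successor row. -/
lemma wsHMul (a : Fin m → ℂ) (X : Matrix (Fin m) (Fin n) ℂ) (i : ℕ) (hi : i < m) (j : Fin n) :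
    ((wsMatrix a)ᴴ * X) ⟨(i+1) % m, Nat.mod_lt _ (by omega)⟩ j
      = (starRingEnd ℂ) (a ⟨i, hi⟩) * X ⟨i, hi⟩ j := by
  rw [Matrix.mul_apply, Finset.sum_eq_single (⟨i, hi⟩ : Fin m)]
  · rw [Matrix.conjTranspose_apply,
      show wsMatrix a ⟨i, hi⟩ ⟨(i+1) % m, Nat.mod_lt _ (by omega)⟩ = a ⟨i, hi⟩ from if_pos rfl,
      starRingEnd_apply]
  · intro k _ hk
    have hne : ¬ ((i+1) % m = ((k:ℕ)+1) % m) := fun h =>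
      hk (Fin.ext (ws_succ_mod_inj hi k.isLt h).symm)
    rw [Matrix.conjTranspose_apply,
      show wsMatrix a k ⟨(i+1) % m, Nat.mod_lt _ (by omega)⟩ = 0 from if_neg hne,
      star_zero, zero_mul]
  · intro h; exact absurd (Finset.mem_univ _) h

/-- Entry of `X * (wsMatrix b)ᴴ`. -/
lemma mulWsH (b : Fin n → ℂ) (X : Matrix (Fin m) (Fin n) ℂ) (i : Fin m) (j : ℕ) (hj : j < n) :
    (X * (wsMatrix b)ᴴ) i ⟨j, hj⟩
      = X i ⟨(j+1) % n, Nat.mod_lt _ (by omega)⟩ * (starRingEnd ℂ) (b ⟨j, hj⟩) := by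
  rw [Matrix.mul_apply, Finset.sum_eq_single (⟨(j+1) % n, Nat.mod_lt _ (by omega)⟩ : Fin n)]
  · rw [Matrix.conjTranspose_apply,
      show wsMatrix b ⟨j, hj⟩ ⟨(j+1) % n, Nat.mod_lt _ (by omega)⟩ = b ⟨j, hj⟩ from if_pos rfl,
      starRingEnd_apply]
  · intro k _ hk
    have hne : ¬ ((k:ℕ) = (j+1) % n) := fun h => hk (Fin.ext h)
    rw [Matrix.conjTranspose_apply,
      show wsMatrix b ⟨j, hj⟩ k = 0 from if_neg hne, star_zero, mul_zero]
  · intro h; exact absurd (Finset.mem_univ _) h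

end Aux

theorem stmt6 (m n : ℕ) (hm : 2 ≤ m) (hn : 2 ≤ n)
    (a : Fin m → ℝ) (b : Fin n → ℝ)
    (ha : ∀ i : Fin m, (i : ℕ) + 1 < m → 0 < a i)
    (hb : ∀ j : Fin n, (j : ℕ) + 1 < n → 0 < b j)
    (A : Matrix (Fin m) (Fin m) ℂ) (B : Matrix (Fin n) (Fin n) ℂ)
    (hA : A = wsMatrix fun i => if (i : ℕ) + 1 < m then (a i : ℂ) else 0)
    (hB : B = wsMatrix fun j => if (j : ℕ) + 1 < n then (b j : ℂ) else 0)
    (U : Matrix (Fin m) (Fin n) ℂ)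
    (hU1 : ∀ k : ℕ, A ^ k * U = U * B ^ k)
    (hU2 : ∀ k : ℕ, Aᴴ ^ k * U = U * Bᴴ ^ k)
    (hmn : m ≠ n) : U = 0 := by
  set cA : Fin m → ℂ := fun i => if (i : ℕ) + 1 < m then (a i : ℂ) else 0 with hcA
  set cB : Fin n → ℂ := fun j => if (j : ℕ) + 1 < n then (b j : ℂ) else 0 with hcB
  have h1 : wsMatrix cA * U = U * wsMatrix cB := by
    have := hU1 1; rwa [pow_one, pow_one, hA, hB] at this
  have h2 : (wsMatrix cA)ᴴ * U = U * (wsMatrix cB)ᴴ := by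
    have := hU2 1; rwa [pow_one, pow_one, hA, hB] at this
  -- values of the weight functions
  have hcAv : ∀ (i : ℕ) (hi : i + 1 < m), cA ⟨i, by omega⟩ = ((a ⟨i, by omega⟩ : ℝ) : ℂ) := by
    intro i hi; simp only [hcA]; rw [if_pos]; exact hi
  have hcAz : cA ⟨m - 1, by omega⟩ = 0 := by
    simp only [hcA]; rw [if_neg]; omega
  have hcBv : ∀ (j : ℕ) (hj : j + 1 < n), cB ⟨j, by omega⟩ = ((b ⟨j, by omega⟩ : ℝ) : ℂ) := by
    intro j hj; simp only [hcB]; rw [if_pos]; exact hj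
  have hcBz : cB ⟨n - 1, by omega⟩ = 0 := by
    simp only [hcB]; rw [if_neg]; omega
  have hane : ∀ (i : ℕ) (hi : i + 1 < m), ((a ⟨i, by omega⟩ : ℝ) : ℂ) ≠ 0 := by
    intro i hi
    exact_mod_cast (ha ⟨i, by omega⟩ hi).ne'
  have hbne : ∀ (j : ℕ) (hj : j + 1 < n), ((b ⟨j, by omega⟩ : ℝ) : ℂ) ≠ 0 := by
    intro j hj
    exact_mod_cast (hb ⟨j, by omega⟩ hj).ne'
  -- the basic recurrence : a_i U_{i+1,j+1} = b_j U_{i,j}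
  have hrec : ∀ (i j : ℕ) (hi : i + 1 < m) (hj : j + 1 < n),
      ((a ⟨i, by omega⟩ : ℝ) : ℂ) * U ⟨i+1, hi⟩ ⟨j+1, hj⟩
        = ((b ⟨j, by omega⟩ : ℝ) : ℂ) * U ⟨i, by omega⟩ ⟨j, by omega⟩ := by
    intro i j hi hj
    have h5 : (wsMatrix cA * U) ⟨i, by omega⟩ ⟨(j+1) % n, Nat.mod_lt _ (by omega)⟩
        = (U * wsMatrix cB) ⟨i, by omega⟩ ⟨(j+1) % n, Nat.mod_lt _ (by omega)⟩ := by rw [h1]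
    rw [wsMul cA U i (by omega), mulWs cB U _ j (by omega)] at h5
    have e1 : (⟨(i+1) % m, Nat.mod_lt _ (by omega)⟩ : Fin m) = ⟨i+1, hi⟩ :=
      Fin.ext (Nat.mod_eq_of_lt (by omega))
    have e2 : (⟨(j+1) % n, Nat.mod_lt _ (by omega)⟩ : Fin n) = ⟨j+1, hj⟩ :=
      Fin.ext (Nat.mod_eq_of_lt (by omega))
    rw [e1, e2, hcAv i hi, hcBv j hj] at h5
    rw [h5, mul_comm]
  -- column 0 vanishes below the corner
  have hcol0 : ∀ (i : ℕ) (hi : i + 1 < m), U ⟨i+1, hi⟩ ⟨0, by omega⟩ = 0 := by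
    intro i hi
    have h5 : (wsMatrix cA * U) ⟨i, by omega⟩ ⟨(n-1+1) % n, Nat.mod_lt _ (by omega)⟩
        = (U * wsMatrix cB) ⟨i, by omega⟩ ⟨(n-1+1) % n, Nat.mod_lt _ (by omega)⟩ := by rw [h1]
    rw [wsMul cA U i (by omega), mulWs cB U _ (n-1) (by omega)] at h5
    rw [hcBz, mul_zero, hcAv i hi] at h5
    have e1 : (⟨(i+1) % m, Nat.mod_lt _ (by omega)⟩ : Fin m) = ⟨i+1, hi⟩ :=
      Fin.ext (Nat.mod_eq_of_lt (by omega))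
    have e2 : (⟨(n-1+1) % n, Nat.mod_lt _ (by omega)⟩ : Fin n) = ⟨0, by omega⟩ :=
      Fin.ext (show (n-1+1) % n = 0 by rw [show n-1+1 = n from by omega]; exact Nat.mod_self n)
    rw [e1, e2] at h5
    exact (mul_eq_zero.mp h5).resolve_left (hane i hi)
  -- row 0 vanishes to the right of the corner
  have hrow0 : ∀ (j : ℕ) (hj : j + 1 < n), U ⟨0, by omega⟩ ⟨j+1, hj⟩ = 0 := by
    intro j hj
    have h5 : ((wsMatrix cA)ᴴ * U) ⟨(m-1+1) % m, Nat.mod_lt _ (by omega)⟩ ⟨j, by omega⟩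
        = (U * (wsMatrix cB)ᴴ) ⟨(m-1+1) % m, Nat.mod_lt _ (by omega)⟩ ⟨j, by omega⟩ := by
      rw [h2]
    rw [wsHMul cA U (m-1) (by omega), mulWsH cB U _ j (by omega)] at h5
    rw [hcAz, map_zero, zero_mul] at h5
    have e1 : (⟨(m-1+1) % m, Nat.mod_lt _ (by omega)⟩ : Fin m) = ⟨0, by omega⟩ :=
      Fin.ext (show (m-1+1) % m = 0 by rw [show m-1+1 = m from by omega]; exact Nat.mod_self m)
    have e2 : (⟨(j+1) % n, Nat.mod_lt _ (by omega)⟩ : Fin n) = ⟨j+1, hj⟩ :=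
      Fin.ext (Nat.mod_eq_of_lt (by omega))
    simp only [e1, e2, hcBv j hj] at h5
    have h6 := h5.symm
    rcases mul_eq_zero.mp h6 with h7 | h7
    · exact h7
    · exact absurd h7 (by rw [starRingEnd_apply]; exact star_ne_zero.mpr (hbne j hj))
  -- the corner diagonal entry vanishes
  have hpm : min m n - 1 < m := by omega
  have hpn : min m n - 1 < n := by omega
  have hUpp : U ⟨min m n - 1, hpm⟩ ⟨min m n - 1, hpn⟩ = 0 := by
    have h4 : wsMatrix cA * ((wsMatrix cA)ᴴ * U) = (U * wsMatrix cB) * (wsMatrix cB)ᴴ := by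
      rw [h2, ← Matrix.mul_assoc, h1]
    have h5 : (wsMatrix cA * ((wsMatrix cA)ᴴ * U)) ⟨min m n - 1, hpm⟩ ⟨min m n - 1, hpn⟩
        = ((U * wsMatrix cB) * (wsMatrix cB)ᴴ) ⟨min m n - 1, hpm⟩ ⟨min m n - 1, hpn⟩ := by
      rw [h4]
    rw [wsMul cA _ (min m n - 1) hpm, mulWsH cB _ _ (min m n - 1) hpn] at h5
    rcases lt_or_gt_of_ne hmn with hlt | hlt
    · -- m < n : the left side is 0
      have e1 : cA ⟨min m n - 1, hpm⟩ = 0 := by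
        simp only [hcA]; rw [if_neg]; omega
      rw [e1, zero_mul] at h5
      rw [mulWs cB U _ (min m n - 1) hpn] at h5
      rw [hcBv (min m n - 1) (by omega)] at h5
      have h6 := h5.symm
      rw [mul_assoc] at h6
      rcases mul_eq_zero.mp h6 with h7 | h7
      · exact h7
      · exfalso
        rcases mul_eq_zero.mp h7 with h8 | h8
        · exact hbne (min m n - 1) (by omega) h8
        · exact absurd h8 (by
            rw [starRingEnd_apply]
            exact star_ne_zero.mpr (hbne (min m n - 1) (by omega)))
    · -- n < m : the right side is 0
      have e2 : cB ⟨min m n - 1, hpn⟩ = 0 := by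
        simp only [hcB]; rw [if_neg]; omega
      rw [e2, map_zero, mul_zero] at h5
      rw [wsHMul cA U (min m n - 1) hpm] at h5
      rw [hcAv (min m n - 1) (by omega)] at h5
      rcases mul_eq_zero.mp h5 with h7 | h7
      · exact absurd h7 (hane (min m n - 1) (by omega))
      · rcases mul_eq_zero.mp h7 with h8 | h8
        · exact absurd h8 (by
            rw [starRingEnd_apply]
            exact star_ne_zero.mpr (hane (min m n - 1) (by omega)))
        · exact h8
  -- the whole diagonal up to the corner vanishes
  have hdiag : ∀ t k (hk : k + t = min m n - 1), U ⟨k, by omega⟩ ⟨k, by omega⟩ = 0 := by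
    intro t
    induction t with
    | zero =>
      intro k hk
      have hkp : k = min m n - 1 := by omega
      subst hkp
      exact hUpp
    | succ t ih =>
      intro k hk
      have h5 := hrec k k (by omega) (by omega)
      have h6 := ih (k+1) (by omega)
      rw [h6, mul_zero] at h5
      have h7 := h5.symm
      exact (mul_eq_zero.mp h7).resolve_left (hbne k (by omega))
  -- main induction : all entries vanish
  have main : ∀ ii : ℕ, ∀ (i : Fin m) (j : Fin n), (i : ℕ) = ii → U i j = 0 := by
    intro ii
    induction ii with
    | zero =>
      intro i j hi
      have ei : i = ⟨0, by omega⟩ := Fin.ext hi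
      rcases Nat.eq_zero_or_pos (j : ℕ) with hj | hj
      · have ej : j = ⟨0, by omega⟩ := Fin.ext hj
        rw [ei, ej]
        exact hdiag (min m n - 1) 0 (by omega)
      · have hjlt := j.isLt
        have ej : j = ⟨((j:ℕ) - 1) + 1, by omega⟩ :=
          Fin.ext (show (j:ℕ) = ((j:ℕ) - 1) + 1 by omega)
        rw [ei, ej]
        exact hrow0 ((j:ℕ) - 1) (by omega)
    | succ k ih =>
      intro i j hi
      have hilt := i.isLt
      have hik : k + 1 < m := by omega
      have ei : i = ⟨k+1, hik⟩ := Fin.ext hi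
      rcases Nat.eq_zero_or_pos (j : ℕ) with hj | hj
      · have ej : j = ⟨0, by omega⟩ := Fin.ext hj
        rw [ei, ej]
        exact hcol0 k hik
      · have hjlt := j.isLt
        have hjn : ((j:ℕ) - 1) + 1 < n := by omega
        have ej : j = ⟨((j:ℕ) - 1) + 1, hjn⟩ :=
          Fin.ext (show (j:ℕ) = ((j:ℕ) - 1) + 1 by omega)
        have h5 := hrec k ((j:ℕ) - 1) hik hjn
        have h6 : U ⟨k, by omega⟩ ⟨(j:ℕ) - 1, by omega⟩ = 0 := ih ⟨k, by omega⟩ _ rfl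
        rw [h6, mul_zero] at h5
        rw [ei, ej]
        exact (mul_eq_zero.mp h5).resolve_left (hane k hik)
  ext i j
  exact main (i : ℕ) i j rfl
end

section
/- Let A be the n-by-n weighted shift matrix with weights a_1, …, a_{n−1}, 0 and B the n-by-n weighted shift matrix with weights b_1, …, b_{n−1}, 0, where all a_i and b_j are strictly positive real numbers. Suppose U is an n-by-n complex matrix such that A^k·U = U·B^k and (A*)^k·U = U·(B*)^k for every integer k ≥ 0. Then U is a diagonal matrix. -/
open Matrix

lemma ws_shiftRow {n : ℕ} (a : Fin n → ℝ) (U : Matrix (Fin n) (Fin n) ℂ)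
    (i : ℕ) (hi : i+1 < n) (q : Fin n) :
    ((wsMatrix fun k => if (k : ℕ) + 1 < n then (a k : ℂ) else 0) * U) ⟨i, Nat.lt_of_succ_lt hi⟩ q
      = (a ⟨i, Nat.lt_of_succ_lt hi⟩ : ℂ) * U ⟨i+1, hi⟩ q := by
  rw [Matrix.mul_apply]
  rw [Finset.sum_eq_single (⟨i+1, hi⟩ : Fin n)]
  · simp [wsMatrix, Nat.mod_eq_of_lt hi, hi]
  · intro k _ hk
    simp only [wsMatrix]
    rw [if_neg, zero_mul]
    rw [Fin.val_mk, Nat.mod_eq_of_lt hi]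
    intro h2; exact hk (Fin.ext (by simp only [Fin.val_mk]; omega))
  · simp

lemma ws_shiftRowLast {n : ℕ} (hn : 2 ≤ n) (a : Fin n → ℝ) (U : Matrix (Fin n) (Fin n) ℂ)
    (q : Fin n) :
    ((wsMatrix fun k => if (k : ℕ) + 1 < n then (a k : ℂ) else 0) * U)
      ⟨n-1, by omega⟩ q = 0 := by
  rw [Matrix.mul_apply]
  apply Finset.sum_eq_zero
  intro k _
  simp [wsMatrix, show ¬(n-1+1 < n) from by omega]

lemma ws_shiftCol {n : ℕ} (b : Fin n → ℝ) (U : Matrix (Fin n) (Fin n) ℂ)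
    (p : Fin n) (j : ℕ) (hj : j+1 < n) :
    (U * (wsMatrix fun k => if (k : ℕ) + 1 < n then (b k : ℂ) else 0)) p ⟨j+1, hj⟩
      = U p ⟨j, Nat.lt_of_succ_lt hj⟩ * (b ⟨j, Nat.lt_of_succ_lt hj⟩ : ℂ) := by
  rw [Matrix.mul_apply]
  rw [Finset.sum_eq_single (⟨j, Nat.lt_of_succ_lt hj⟩ : Fin n)]
  · simp [wsMatrix, Nat.mod_eq_of_lt hj, hj]
  · intro k _ hk
    simp only [wsMatrix]
    rcases Nat.lt_or_ge ((k:ℕ)+1) n with h | h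
    · rw [Nat.mod_eq_of_lt h, if_neg, mul_zero]
      intro h2; exact hk (Fin.ext (by simp only [Fin.val_mk]; omega))
    · simp [show ¬((k:ℕ)+1<n) from by omega]
  · simp

lemma ws_hermRow {n : ℕ} (a : Fin n → ℝ) (U : Matrix (Fin n) (Fin n) ℂ)
    (i : ℕ) (hi : i+1 < n) (q : Fin n) :
    ((wsMatrix fun k => if (k : ℕ) + 1 < n then (a k : ℂ) else 0)ᴴ * U) ⟨i+1, hi⟩ q
      = (a ⟨i, Nat.lt_of_succ_lt hi⟩ : ℂ) * U ⟨i, Nat.lt_of_succ_lt hi⟩ q := by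
  rw [Matrix.mul_apply]
  rw [Finset.sum_eq_single (⟨i, Nat.lt_of_succ_lt hi⟩ : Fin n)]
  · simp [wsMatrix, conjTranspose_apply, Nat.mod_eq_of_lt hi, hi, Nat.lt_of_succ_lt hi]
  · intro k _ hk
    simp only [wsMatrix, conjTranspose_apply]
    rcases Nat.lt_or_ge ((k:ℕ)+1) n with h | h
    · rw [Nat.mod_eq_of_lt h]
      rw [if_neg]
      · simp
      · intro h2; exact hk (Fin.ext (by simp only [Fin.val_mk]; omega))
    · simp [show ¬((k:ℕ)+1<n) from by omega]
  · simp

lemma ws_hermColLast {n : ℕ} (hn : 2 ≤ n) (b : Fin n → ℝ) (U : Matrix (Fin n) (Fin n) ℂ)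
    (p : Fin n) :
    (U * (wsMatrix fun k => if (k : ℕ) + 1 < n then (b k : ℂ) else 0)ᴴ) p ⟨n-1, by omega⟩ = 0 := by
  rw [Matrix.mul_apply]
  apply Finset.sum_eq_zero
  intro k _
  simp [wsMatrix, conjTranspose_apply, show ¬(n-1+1 < n) from by omega]

theorem stmt7 (n : ℕ) (hn : 2 ≤ n)
    (a b : Fin n → ℝ)
    (ha : ∀ i : Fin n, (i : ℕ) + 1 < n → 0 < a i)
    (hb : ∀ j : Fin n, (j : ℕ) + 1 < n → 0 < b j)
    (A B : Matrix (Fin n) (Fin n) ℂ)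
    (hA : A = wsMatrix fun i => if (i : ℕ) + 1 < n then (a i : ℂ) else 0)
    (hB : B = wsMatrix fun j => if (j : ℕ) + 1 < n then (b j : ℂ) else 0)
    (U : Matrix (Fin n) (Fin n) ℂ)
    (hU1 : ∀ k : ℕ, A ^ k * U = U * B ^ k)
    (hU2 : ∀ k : ℕ, Aᴴ ^ k * U = U * Bᴴ ^ k) :
    U.IsDiag := by
  subst hA hB
  have hAU := hU1 1
  have hAU2 := hU2 1
  simp only [pow_one] at hAU hAU2
  have hbne : ∀ (j : ℕ) (hj : j + 1 < n), ((b ⟨j, Nat.lt_of_succ_lt hj⟩ : ℂ)) ≠ 0 := by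
    intro j hj
    exact_mod_cast ne_of_gt (hb ⟨j, Nat.lt_of_succ_lt hj⟩ (by simpa using hj))
  have hane : ∀ (i : ℕ) (hi : i + 1 < n), ((a ⟨i, Nat.lt_of_succ_lt hi⟩ : ℂ)) ≠ 0 := by
    intro i hi
    exact_mod_cast ne_of_gt (ha ⟨i, Nat.lt_of_succ_lt hi⟩ (by simpa using hi))
  have F1 : ∀ (i j : ℕ) (hi : i+1 < n) (hj : j+1 < n),
      (a ⟨i, Nat.lt_of_succ_lt hi⟩ : ℂ) * U ⟨i+1, hi⟩ ⟨j+1, hj⟩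
        = U ⟨i, Nat.lt_of_succ_lt hi⟩ ⟨j, Nat.lt_of_succ_lt hj⟩
            * (b ⟨j, Nat.lt_of_succ_lt hj⟩ : ℂ) := by
    intro i j hi hj
    have h := congrFun (congrFun hAU ⟨i, Nat.lt_of_succ_lt hi⟩) ⟨j+1, hj⟩
    rwa [ws_shiftRow a U i hi, ws_shiftCol b U _ j hj] at h
  have F2 : ∀ (j : ℕ) (hj : j+1 < n),
      U ⟨n-1, by omega⟩ ⟨j, Nat.lt_of_succ_lt hj⟩ = 0 := by
    intro j hj
    have h := congrFun (congrFun hAU ⟨n-1, by omega⟩) ⟨j+1, hj⟩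
    rw [ws_shiftRowLast hn a U, ws_shiftCol b U _ j hj] at h
    exact (mul_eq_zero.mp h.symm).resolve_right (hbne j hj)
  have F3 : ∀ (i : ℕ) (hi : i+1 < n),
      U ⟨i, Nat.lt_of_succ_lt hi⟩ ⟨n-1, by omega⟩ = 0 := by
    intro i hi
    have h := congrFun (congrFun hAU2 ⟨i+1, hi⟩) ⟨n-1, by omega⟩
    rw [ws_hermRow a U i hi, ws_hermColLast hn b U] at h
    exact (mul_eq_zero.mp h).resolve_left (hane i hi)
  have key : ∀ (m i j : ℕ) (hi : i < n) (hj : j < n), i ≠ j →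
      n - 1 - max i j ≤ m → U ⟨i, hi⟩ ⟨j, hj⟩ = 0 := by
    intro m
    induction m with
    | zero =>
      intro i j hi hj hne hm
      rcases Nat.lt_or_ge i j with h | h
      · have hj' : j = n - 1 := by omega
        subst hj'
        exact F3 i (by omega)
      · have hi' : i = n - 1 := by omega
        subst hi'
        exact F2 j (by omega)
    | succ m ih =>
      intro i j hi hj hne hm
      rcases Nat.lt_or_ge (max i j) (n-1) with h | h
      · have hi1 : i + 1 < n := by omega
        have hj1 : j + 1 < n := by omega
        have h1 := F1 i j hi1 hj1
        rw [ih (i+1) (j+1) hi1 hj1 (by omega) (by omega), mul_zero] at h1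
        exact (mul_eq_zero.mp h1.symm).resolve_right (hbne j hj1)
      · rcases Nat.lt_or_ge i j with h' | h'
        · have hj' : j = n - 1 := by omega
          subst hj'
          exact F3 i (by omega)
        · have hi' : i = n - 1 := by omega
          subst hi'
          exact F2 j (by omega)
  intro i j hij
  have := key (n-1) i.val j.val i.isLt j.isLt (fun h => hij (Fin.ext h)) (by omega)
  simpa using this
end

section
/- Let A be the n-by-n weighted shift matrix with weights a_1, …, a_{n−1}, 0, where all a_i are strictly positive real numbers. If U is an n-by-n complex matrix such that A^k·U = U·A^k and (A*)^k·U = U·(A*)^k for every integer k ≥ 0, then U = α·I_n for some complex number α. -/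
open Matrix

/-!
Because the last weight vanishes, `A` sends `eⱼ₊₁ ↦ aⱼ eⱼ` and `e₀ ↦ 0`, and the case `k = 1`
already suffices. Entry `(i, 0)` of `A U = U A` reads `aᵢ Uᵢ₊₁,₀ = 0`, so the first column of `U`
vanishes off the diagonal. Entries `(0, j)` and `(i + 1, j)` of `A* U = U A*` read
`U₀,ⱼ₊₁ conj aⱼ = 0` and `Uᵢ₊₁,ⱼ₊₁ conj aⱼ = conj aᵢ Uᵢ,ⱼ`, so by induction on `j` each column
of `U` is `U₀₀` times the corresponding column of the identity.
-/

section

variable {m : ℕ} (b : Fin (m + 1) → ℂ)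

lemma wsMatrix_apply_eq_ite (i j : Fin (m + 1)) :
    wsMatrix b i j = if j = i + 1 then b i else 0 := by
  have hmod : ((i : ℕ) + 1) % (m + 1) = ((i + 1 : Fin (m + 1)) : ℕ) := by
    rw [Fin.val_add_one]
    split_ifs with h
    · simp [h]
    · exact Nat.mod_eq_of_lt (by have := Fin.val_lt_last h; omega)
  simp only [wsMatrix, hmod, Fin.val_inj]

lemma wsMatrix_castSucc_apply (i : Fin m) (k : Fin (m + 1)) :
    wsMatrix b i.castSucc k = if k = i.succ then b i.castSucc else 0 := by
  rw [wsMatrix_apply_eq_ite, Fin.coeSucc_eq_succ]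

lemma wsMatrix_apply_succ (k : Fin (m + 1)) (j : Fin m) :
    wsMatrix b k j.succ = if k = j.castSucc then b j.castSucc else 0 := by
  simp only [wsMatrix_apply_eq_ite, ← Fin.coeSucc_eq_succ, eq_comm (a := j.castSucc + 1),
    add_left_inj]
  split_ifs with h <;> simp [h]

lemma wsMatrix_apply_zero (hb : b (Fin.last m) = 0) (k : Fin (m + 1)) : wsMatrix b k 0 = 0 := by
  simp only [wsMatrix_apply_eq_ite, ← Fin.last_add_one, eq_comm (a := Fin.last m + 1),
    add_left_inj]
  split_ifs with h <;> simp [h, hb]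

variable (U : Matrix (Fin (m + 1)) (Fin (m + 1)) ℂ)

lemma wsMatrix_mul_apply_castSucc (i : Fin m) (j : Fin (m + 1)) :
    (wsMatrix b * U) i.castSucc j = b i.castSucc * U i.succ j := by
  simp [mul_apply, wsMatrix_castSucc_apply]

lemma mul_wsMatrix_apply_zero (hb : b (Fin.last m) = 0) (i : Fin (m + 1)) :
    (U * wsMatrix b) i 0 = 0 := by
  simp [mul_apply, wsMatrix_apply_zero b hb]

lemma conjTranspose_wsMatrix_mul_apply_zero (hb : b (Fin.last m) = 0) (j : Fin (m + 1)) :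
    ((wsMatrix b)ᴴ * U) 0 j = 0 := by
  simp [mul_apply, wsMatrix_apply_zero b hb]

lemma conjTranspose_wsMatrix_mul_apply_succ (i : Fin m) (j : Fin (m + 1)) :
    ((wsMatrix b)ᴴ * U) i.succ j = star (b i.castSucc) * U i.castSucc j := by
  simp [mul_apply, wsMatrix_apply_succ, apply_ite]

lemma mul_conjTranspose_wsMatrix_apply_castSucc (i : Fin (m + 1)) (j : Fin m) :
    (U * (wsMatrix b)ᴴ) i j.castSucc = U i j.succ * star (b j.castSucc) := by
  simp [mul_apply, wsMatrix_castSucc_apply, apply_ite]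

variable {b U}

theorem eq_smul_one_of_commute_wsMatrix (hb : b (Fin.last m) = 0)
    (hb₀ : ∀ i : Fin m, b i.castSucc ≠ 0)
    (hU : wsMatrix b * U = U * wsMatrix b) (hU' : (wsMatrix b)ᴴ * U = U * (wsMatrix b)ᴴ) :
    U = U 0 0 • 1 := by
  have hstar (i : Fin m) : star (b i.castSucc) ≠ 0 := star_ne_zero.mpr (hb₀ i)
  have col_zero (i : Fin m) : U i.succ 0 = 0 := by
    have h := congr_fun₂ hU i.castSucc 0
    rw [wsMatrix_mul_apply_castSucc, mul_wsMatrix_apply_zero b U hb] at h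
    exact (mul_eq_zero.mp h).resolve_left (hb₀ i)
  have row_zero (j : Fin m) : U 0 j.succ = 0 := by
    have h := congr_fun₂ hU' 0 j.castSucc
    rw [conjTranspose_wsMatrix_mul_apply_zero b U hb,
      mul_conjTranspose_wsMatrix_apply_castSucc] at h
    exact (mul_eq_zero.mp h.symm).resolve_right (hstar j)
  have succ_succ (i j : Fin m) :
      U i.succ j.succ * star (b j.castSucc) = star (b i.castSucc) * U i.castSucc j.castSucc := by
    have h := congr_fun₂ hU' i.succ j.castSucc
    rwa [conjTranspose_wsMatrix_mul_apply_succ, mul_conjTranspose_wsMatrix_apply_castSucc,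
      eq_comm] at h
  suffices h : ∀ j i, U i j = if i = j then U 0 0 else 0 by
    ext i j
    simp [h j i, one_apply]
  intro j
  induction j using Fin.induction with
  | zero =>
    intro i
    cases i using Fin.cases with
    | zero => simp
    | succ i => simp [col_zero, Fin.succ_ne_zero]
  | succ j ih =>
    intro i
    cases i using Fin.cases with
    | zero => simp [row_zero, (Fin.succ_ne_zero j).symm]
    | succ i =>
      have h := succ_succ i j
      simp only [ih, Fin.castSucc_inj] at h
      simp only [Fin.succ_inj]
      split_ifs at h ⊢ with hij
      · subst hij
        exact mul_right_cancel₀ (hstar i) (h.trans (mul_comm _ _))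
      · exact (mul_eq_zero.mp (h.trans (mul_zero _))).resolve_right (hstar j)

end

theorem stmt9_general (n : ℕ)
    (a : Fin n → ℝ)
    (ha : ∀ i : Fin n, (i : ℕ) + 1 < n → 0 < a i)
    (A : Matrix (Fin n) (Fin n) ℂ)
    (hA : A = wsMatrix fun i => if (i : ℕ) + 1 < n then (a i : ℂ) else 0)
    (U : Matrix (Fin n) (Fin n) ℂ)
    (hU1 : ∀ k : ℕ, A ^ k * U = U * A ^ k)
    (hU2 : ∀ k : ℕ, Aᴴ ^ k * U = U * Aᴴ ^ k) :
    ∃ α : ℂ, U = α • (1 : Matrix (Fin n) (Fin n) ℂ) := by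
  subst hA
  rcases n with _ | m
  · exact ⟨0, Subsingleton.elim _ _⟩
  refine ⟨U 0 0, eq_smul_one_of_commute_wsMatrix ?_ (fun i => ?_)
    (by simpa using hU1 1) (by simpa using hU2 1)⟩
  · simp
  · simpa using (ha i.castSucc (by simp)).ne'

theorem stmt9 (n : ℕ) (hn : 2 ≤ n)
    (a : Fin n → ℝ)
    (ha : ∀ i : Fin n, (i : ℕ) + 1 < n → 0 < a i)
    (A : Matrix (Fin n) (Fin n) ℂ)
    (hA : A = wsMatrix fun i => if (i : ℕ) + 1 < n then (a i : ℂ) else 0)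
    (U : Matrix (Fin n) (Fin n) ℂ)
    (hU1 : ∀ k : ℕ, A ^ k * U = U * A ^ k)
    (hU2 : ∀ k : ℕ, Aᴴ ^ k * U = U * Aᴴ ^ k) :
    ∃ α : ℂ, U = α • (1 : Matrix (Fin n) (Fin n) ℂ) :=
  stmt9_general n a ha A hA U hU1 hU2
end

section
/- Let A be an n-by-n weighted shift matrix (n ≥ 2) with weights a_1, …, a_n. Then A is reducible if and only if at least one of the following holds: (a) a_i = a_j = 0 for some 1 ≤ i < j ≤ n; (b) A has periodic weights, i.e., there exists k with 1 ≤ k ≤ ⌊n/2⌋ such that k divides n and |a_j| = |a_{k+j}| for all 1 ≤ j ≤ n−k. -/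
open Matrix

/-- A square complex matrix is reducible if some orthogonal projection `P`
other than `0` and `I` commutes with it (equivalently, `A` and `Aᴴ` have a
common nontrivial invariant subspace). -/
def MatReducible {n : ℕ} (A : Matrix (Fin n) (Fin n) ℂ) : Prop :=
  ∃ P : Matrix (Fin n) (Fin n) ℂ, P * P = P ∧ Pᴴ = P ∧ P ≠ 0 ∧ P ≠ 1 ∧ A * P = P * A

/-- The weights `a_1, …, a_n` (0-indexed as `a 0, …, a (n-1)`) are periodic with
period `k`: `1 ≤ k ≤ ⌊n/2⌋`, `k ∣ n` and `|a_j| = |a_{k+j}|` for `1 ≤ j ≤ n-k`. -/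
def PeriodicWeights (n k : ℕ) (a : Fin n → ℂ) : Prop :=
  1 ≤ k ∧ k ≤ n / 2 ∧ k ∣ n ∧
    ∀ i : Fin n, ∀ h : (i : ℕ) + k < n,
      ‖a i‖ = ‖a ⟨(i : ℕ) + k, h⟩‖

/-!
Let `A` be the shift and `P` a reducing projection. Commuting with `A` gives
`a i * P (i + 1) (j + 1) = P i j * a j`, and commuting with `A Aᴴ = diagonal (‖a i‖ ^ 2)` gives
`‖a i‖ = ‖a j‖` whenever `P i j ≠ 0`. If at most one weight vanishes, nonvanishing therefore
propagates along each cyclic diagonal of `P`: a nonzero entry at offset `d ≠ 0` makes `‖a‖`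
`d`-periodic, hence `gcd d n`-periodic, while a diagonal `P` is forced to be scalar.

Conversely, two zero weights cut the cycle into two arcs, and the coordinate projection onto
either arc reduces `A`. If no weight vanishes and `‖a‖` is `k`-periodic, then `Aᵏ` is a multiple
of a unitary `U` commuting with `A`; rescaled so that `Uᵖ = 1` (`p = n / k ≥ 2`), the average
`(1 / p) ∑ Uᵗ` is a projection commuting with `A` whose `(0, 0)` entry is `1 / p`.
-/

open Function
open Fin.NatCast Fin.CommRing

namespace Matrix

variable {n : ℕ} {R : Type*}

def cycShift [Zero R] (e : Fin n) (w : Fin n → R) : Matrix (Fin n) (Fin n) R :=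
  of fun i j => if j = i + e then w i else 0

section Semiring
variable [Semiring R]

theorem cycShift_mul_apply (e : Fin n) (w : Fin n → R) (B : Matrix (Fin n) (Fin n) R)
    (i j : Fin n) : (cycShift e w * B) i j = w i * B (i + e) j := by
  rw [mul_apply, Finset.sum_eq_single (i + e)] <;> simp +contextual [cycShift]

theorem mul_cycShift_apply [NeZero n] (e : Fin n) (w : Fin n → R)
    (B : Matrix (Fin n) (Fin n) R) (i j : Fin n) :
    (B * cycShift e w) i j = B i (j - e) * w (j - e) := by
  rw [mul_apply, Finset.sum_eq_single (j - e)]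
  · simp [cycShift]
  · intro l _ hl
    simp only [cycShift, of_apply]
    rw [if_neg fun h => hl (eq_sub_of_add_eq h.symm), mul_zero]
  · simp

theorem cycShift_zero [NeZero n] (w : Fin n → R) : cycShift 0 w = diagonal w := by
  ext i j
  simp [cycShift, diagonal, eq_comm]

theorem cycShift_mul_cycShift (e e' : Fin n) (w w' : Fin n → R) :
    cycShift e w * cycShift e' w' = cycShift (e + e') (fun i => w i * w' (i + e)) := by
  ext i j
  rw [cycShift_mul_apply]
  simp [cycShift, add_assoc]

theorem smul_cycShift (c : R) (e : Fin n) (w : Fin n → R) :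
    c • cycShift e w = cycShift e (c • w) := by
  ext i j
  simp [cycShift]

theorem cycShift_apply_self [NeZero n] {e : Fin n} (he : e ≠ 0) (w : Fin n → R) (i : Fin n) :
    cycShift e w i i = 0 := by
  simp [cycShift, he]

end Semiring

theorem cycShift_pow [NeZero n] [CommSemiring R] (e : Fin n) (w : Fin n → R) (s : ℕ) :
    cycShift e w ^ s = cycShift (s • e) (fun i => ∏ t ∈ Finset.range s, w (i + t • e)) := by
  induction s with
  | zero => simp [cycShift_zero]
  | succ s ih =>
    rw [pow_succ, ih, cycShift_mul_cycShift, succ_nsmul]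
    simp only [Finset.prod_range_succ]

theorem conjTranspose_cycShift [NeZero n] [Semiring R] [StarRing R] (e : Fin n)
    (w : Fin n → R) : (cycShift e w)ᴴ = cycShift (-e) (fun i => star (w (i - e))) := by
  ext i j
  simp only [conjTranspose_apply, cycShift, of_apply]
  by_cases h : i = j + e
  · subst h; simp
  · rw [if_neg h, if_neg (by rintro rfl; simp at h), star_zero]

theorem cycShift_mem_unitaryGroup [NeZero n] {e : Fin n} {w : Fin n → ℂ}
    (hw : ∀ i, ‖w i‖ = 1) : cycShift e w ∈ unitaryGroup (Fin n) ℂ := by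
  rw [mem_unitaryGroup_iff', star_eq_conjTranspose, conjTranspose_cycShift,
    cycShift_mul_cycShift, neg_add_cancel, cycShift_zero, ← diagonal_one]
  congr 1
  funext i
  simp [← sub_eq_add_neg, Complex.conj_mul', hw]

end Matrix

theorem Fin.forall_of_imp_add_one {n : ℕ} [NeZero n] {p : Fin n → Prop}
    (h : ∀ i, p i → p (i + 1)) {i : Fin n} (hi : p i) (j : Fin n) : p j := by
  have key : ∀ t : ℕ, p (i + t) := by
    intro t
    induction t with
    | zero => simpa using hi
    | succ t ih => simpa [add_assoc] using h _ ih
  simpa using key (j - i).val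

section StarProjection

variable {R : Type*} [Ring R] [StarRing R] [Algebra ℂ R] [StarModule ℂ R]

theorem exists_smul_mem_unitary_pow_eq_one [Nontrivial R] {U : R} (hU : U ∈ unitary R)
    {p : ℕ} (hp : p ≠ 0) {ω : ℂ} (hUp : U ^ p = ω • 1) :
    ∃ μ : ℂ, μ • U ∈ unitary R ∧ (μ • U) ^ p = 1 := by
  have hω : ‖ω‖ = 1 := by
    have h := Unitary.star_mul_self_of_mem (pow_mem hU p)
    rw [hUp, star_smul, star_one, smul_mul_smul, one_mul, ← Algebra.algebraMap_eq_smul_one,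
      ← map_one (algebraMap ℂ R), (algebraMap ℂ R).injective.eq_iff, Complex.star_def,
      Complex.conj_mul'] at h
    exact (pow_eq_one_iff_of_nonneg (norm_nonneg ω) two_ne_zero).mp (by exact_mod_cast h)
  have hω0 : ω ≠ 0 := norm_ne_zero_iff.mp (by simp [hω])
  obtain ⟨μ, hμ⟩ := IsAlgClosed.exists_pow_nat_eq ω⁻¹ (Nat.pos_of_ne_zero hp)
  have hμ1 : ‖μ‖ = 1 :=
    (pow_eq_one_iff_of_nonneg (norm_nonneg μ) hp).mp
      (by rw [← norm_pow, hμ, norm_inv, hω, inv_one])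
  refine ⟨μ, Unitary.smul_mem_of_mem ?_ hU, ?_⟩
  · rw [Unitary.mem_iff, Complex.star_def, Complex.conj_mul', Complex.mul_conj', hμ1]
    simp
  · rw [smul_pow, hμ, hUp, inv_smul_smul₀ hω0]

theorem isStarProjection_smul_sum_pow {W : R} (hW : W ∈ unitary R) {p : ℕ} (hp : p ≠ 0)
    (hWp : W ^ p = 1) : IsStarProjection ((p : ℂ)⁻¹ • ∑ t ∈ Finset.range p, W ^ t) := by
  set S := ∑ t ∈ Finset.range p, W ^ t
  have hp' : (p : ℂ) ≠ 0 := Nat.cast_ne_zero.mpr hp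
  have pow_mul_S : ∀ V : R, V * S = S → ∀ t, V ^ t * S = S := by
    intro V hV t
    induction t with
    | zero => rw [pow_zero, one_mul]
    | succ t ih => rw [pow_succ, mul_assoc, hV, ih]
  have hWS : W * S = S := by
    have h := mul_geom_sum W p
    rwa [hWp, sub_self, sub_mul, one_mul, sub_eq_zero] at h
  have hstarWS : star W * S = S := by
    rw [← hWS, ← mul_assoc, Unitary.star_mul_self_of_mem hW, one_mul, hWS]
  have sum_mul_S : ∀ V : R, V * S = S →
      (∑ t ∈ Finset.range p, V ^ t) * S = (p : ℂ) • S := by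
    intro V hV
    rw [Finset.sum_mul, Finset.sum_congr rfl fun t _ => pow_mul_S V hV t, Finset.sum_const,
      Finset.card_range, Nat.cast_smul_eq_nsmul]
  have hSS : S * S = (p : ℂ) • S := sum_mul_S W hWS
  have hSa : star S = S := by
    have h : star S * S = (p : ℂ) • S := by
      rw [star_sum]
      simp_rw [star_pow]
      exact sum_mul_S _ hstarWS
    have h' := (IsSelfAdjoint.star_mul_self S).star_eq
    rw [h, star_smul, star_natCast] at h'
    exact smul_right_injective R hp' h'
  refine ⟨?_, ?_⟩
  · rw [IsIdempotentElem, smul_mul_smul, hSS, smul_smul, inv_mul_cancel_right₀ hp']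
  · rw [IsSelfAdjoint, star_smul, star_inv₀, star_natCast, hSa]

end StarProjection

section Periodic

variable {α : Type*}

theorem Function.Periodic.nat_gcd {f : ℕ → α} {c d : ℕ} (hc : Periodic f c)
    (hd : Periodic f d) (hd0 : 0 < d) : Periodic f (c.gcd d) := by
  by_cases hlt : c.gcd d < d
  · obtain ⟨m, -, hm⟩ := Nat.exists_mul_mod_eq_gcd hlt
    intro x
    calc f (x + c.gcd d) = f (x + c.gcd d + c * m / d * d) := (hd.nat_mul _ _).symm
      _ = f (x + m * c) := by rw [add_assoc, ← hm, Nat.mod_add_div', mul_comm]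
      _ = f x := hc.nat_mul m x
  · rwa [le_antisymm (Nat.gcd_le_right _ hd0) (not_lt.mp hlt)]

theorem Nat.periodic_of_forall_add_lt {f : ℕ → α} {k n : ℕ} (hkn : k ∣ n) (hn0 : 0 < n)
    (hn : Periodic f n) (h : ∀ x, x + k < n → f x = f (x + k)) : Periodic f k := by
  have hk0 : 0 < k := Nat.pos_of_dvd_of_pos hkn hn0
  have hlt : ∀ x < n, f x = f (x % k) := by
    intro x
    induction x using Nat.strong_induction_on with
    | _ x ih =>
      intro hx
      by_cases hxk : x < k
      · rw [Nat.mod_eq_of_lt hxk]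
      · rw [Nat.mod_eq_sub_mod (not_lt.mp hxk), ← ih (x - k) (by omega) (by omega),
          h (x - k) (by omega), Nat.sub_add_cancel (not_lt.mp hxk)]
  have hmod : ∀ x, f x = f (x % k) := fun x => by
    rw [← hn.map_mod_nat x, hlt _ (Nat.mod_lt _ hn0), Nat.mod_mod_of_dvd _ hkn]
  intro x
  rw [hmod (x + k), hmod x, Nat.add_mod_right]

theorem Fin.periodic_natCast_iff {n : ℕ} [NeZero n] (f : Fin n → α) (k : ℕ) :
    Periodic (fun x : ℕ => f x) k ↔ Periodic f (k : Fin n) :=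
  ⟨fun h i => by simpa using h i.val, fun h x => by simpa using h x⟩

end Periodic

theorem Nat.le_half_of_dvd_of_lt {k n : ℕ} (hkn : k ∣ n) (hlt : k < n) : k ≤ n / 2 := by
  obtain ⟨c, rfl⟩ := hkn
  rw [Nat.le_div_iff_mul_le two_pos]
  have : 2 ≤ c := by
    by_contra! h
    interval_cases c <;> omega
  exact Nat.mul_le_mul_left k this

theorem periodicWeights_iff {n k : ℕ} [NeZero n] {a : Fin n → ℂ} :
    PeriodicWeights n k a ↔ 1 ≤ k ∧ k ≤ n / 2 ∧ k ∣ n ∧ Periodic (fun x : ℕ => ‖a x‖) k := by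
  have hlin : (∀ i : Fin n, ∀ h : (i : ℕ) + k < n, ‖a i‖ = ‖a ⟨(i : ℕ) + k, h⟩‖) ↔
      ∀ x, x + k < n → ‖a x‖ = ‖a (x + k : ℕ)‖ := by
    refine ⟨fun h x hx => ?_, fun h i hi => ?_⟩
    · simpa [Fin.natCast_eq_mk (show x < n by omega), Fin.natCast_eq_mk hx]
        using h ⟨x, by omega⟩ hx
    · simpa [Fin.natCast_eq_mk hi] using h i hi
  refine and_congr_right fun _ => and_congr_right fun _ => and_congr_right fun hkn =>
    hlin.trans ⟨fun h => Nat.periodic_of_forall_add_lt hkn (Nat.pos_of_neZero n)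
      ((Fin.periodic_natCast_iff (fun s => ‖a s‖) n).mpr (by simp)) h, fun h x _ => (h x).symm⟩

theorem exists_periodicWeights_of_periodic {n : ℕ} [NeZero n] {a : Fin n → ℂ} {d : Fin n}
    (hd : d ≠ 0) (h : Periodic (fun s => ‖a s‖) d) : ∃ k, PeriodicWeights n k a := by
  have hn : 0 < n := Nat.pos_of_neZero n
  have hd0 : 0 < d.val := Nat.pos_of_ne_zero (Fin.val_ne_zero_iff.mpr hd)
  have hgd : (d.val).gcd n ≤ d.val := Nat.gcd_le_left _ hd0
  refine ⟨(d.val).gcd n, periodicWeights_iff.mpr ⟨Nat.gcd_pos_of_pos_left _ hd0,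
    Nat.le_half_of_dvd_of_lt (Nat.gcd_dvd_right _ _) (by omega), Nat.gcd_dvd_right _ _,
    Periodic.nat_gcd ?_ ?_ hn⟩⟩
  · exact (Fin.periodic_natCast_iff (fun s => ‖a s‖) _).mpr (by simpa using h)
  · exact (Fin.periodic_natCast_iff (fun s => ‖a s‖) _).mpr (by simp)

section WeightedShift

variable {n : ℕ} [NeZero n] {a : Fin n → ℂ} {P : Matrix (Fin n) (Fin n) ℂ}

theorem wsMatrix_eq_cycShift (a : Fin n → ℂ) : wsMatrix a = cycShift 1 a := by
  ext i j
  simp [wsMatrix, cycShift, Fin.ext_iff, Fin.val_add]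

theorem wsMatrix_pow (a : Fin n → ℂ) (s : ℕ) :
    wsMatrix a ^ s = cycShift s (fun i => ∏ t ∈ Finset.range s, a (i + (t : Fin n))) := by
  simp [wsMatrix_eq_cycShift, cycShift_pow]

theorem mul_apply_add_one_of_commute (h : Commute (wsMatrix a) P) (i j : Fin n) :
    a i * P (i + 1) (j + 1) = P i j * a j := by
  simpa [wsMatrix_eq_cycShift, cycShift_mul_apply, mul_cycShift_apply]
    using congr_fun₂ h.eq i (j + 1)

theorem norm_eq_of_commute (hP : P.IsHermitian) (h : Commute (wsMatrix a) P) {i j : Fin n}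
    (hij : P i j ≠ 0) : ‖a i‖ = ‖a j‖ := by
  have hAAH : wsMatrix a * (wsMatrix a)ᴴ = diagonal (fun i => ((‖a i‖ ^ 2 : ℝ) : ℂ)) := by
    rw [wsMatrix_eq_cycShift, conjTranspose_cycShift, cycShift_mul_cycShift,
      add_neg_cancel, cycShift_zero]
    congr 1
    funext i
    simp [Complex.mul_conj']
  have hc : Commute (wsMatrix a * (wsMatrix a)ᴴ) P := by
    refine h.mul_left ?_
    simpa [star_eq_conjTranspose, hP.eq] using h.star_star
  have hd := congr_fun₂ hc.eq i j
  rw [hAAH, diagonal_mul, mul_diagonal, mul_comm] at hd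
  have hsq := Complex.ofReal_injective (mul_left_cancel₀ hij hd).symm
  exact (pow_left_inj₀ (norm_nonneg _) (norm_nonneg _) two_ne_zero).mp hsq.symm

theorem apply_add_one_ne_zero_of_commute (hP : P.IsHermitian) (h : Commute (wsMatrix a) P)
    {i j : Fin n} (hij : P i j ≠ 0) (ha : a i ≠ 0 ∨ a j ≠ 0) : P (i + 1) (j + 1) ≠ 0 := by
  have haj : a j ≠ 0 := by
    rcases ha with ha | ha
    · rwa [← norm_ne_zero_iff, ← norm_eq_of_commute hP h hij, norm_ne_zero_iff]
    · exact ha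
  intro h0
  have := mul_apply_add_one_of_commute h i j
  rw [h0, mul_zero] at this
  exact mul_ne_zero hij haj this.symm

theorem diagonal_eq_smul_one_of_commute {d : Fin n → ℂ} (m : Fin n) (ha : ∀ i, i ≠ m → a i ≠ 0)
    (h : Commute (wsMatrix a) (diagonal d)) : diagonal d = d m • 1 := by
  have hstep : ∀ i, i ≠ m → d (i + 1) = d i := fun i hi => by
    have := mul_apply_add_one_of_commute h i i
    rw [diagonal_apply_eq, diagonal_apply_eq, mul_comm (d i)] at this
    exact mul_left_cancel₀ (ha i hi) this
  have hconst : ∀ j, d j = d (m + 1) := by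
    refine Fin.forall_of_imp_add_one (fun i hi => ?_) (i := m + 1) rfl
    by_cases him : i = m
    · rw [him]
    · rw [hstep i him, hi]
  rw [smul_one_eq_diagonal]
  congr 1
  funext j
  rw [hconst j, hconst m]

theorem periodic_norm_of_commute (hP : P.IsHermitian) (h : Commute (wsMatrix a) P)
    (hzero : ∀ i j, a i = 0 → a j = 0 → i = j) {i j : Fin n} (hij : i ≠ j) (hPij : P i j ≠ 0) :
    Periodic (fun s => ‖a s‖) (j - i) := by
  have hdiag : ∀ s, P s (s + (j - i)) ≠ 0 := by
    refine Fin.forall_of_imp_add_one (fun s hs => ?_) (i := i) (by simpa using hPij)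
    have ha : a s ≠ 0 ∨ a (s + (j - i)) ≠ 0 := by
      by_contra! h0
      exact hij (sub_eq_zero.mp (by simpa using (hzero _ _ h0.1 h0.2).symm)).symm
    simpa [add_right_comm] using apply_add_one_ne_zero_of_commute hP h hs ha
  exact fun s => (norm_eq_of_commute hP h (hdiag s)).symm

end WeightedShift

section Reducible

variable {n : ℕ} [NeZero n] {a : Fin n → ℂ}

theorem exists_zeros_or_periodicWeights_of_matReducible (h : MatReducible (wsMatrix a)) :
    (∃ i j : Fin n, i < j ∧ a i = 0 ∧ a j = 0) ∨ ∃ k : ℕ, PeriodicWeights n k a := by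
  obtain ⟨P, hPP, hPH, hP0, hP1, hAP⟩ := h
  refine or_iff_not_imp_left.mpr fun htwo => ?_
  have hzero : ∀ i j, a i = 0 → a j = 0 → i = j := by
    intro i j hi hj
    by_contra hij
    rcases lt_or_gt_of_ne hij with hlt | hlt
    exacts [htwo ⟨i, j, hlt, hi, hj⟩, htwo ⟨j, i, hlt, hj, hi⟩]
  by_cases hdiag : P.IsDiag
  · obtain ⟨m, hm⟩ : ∃ m, ∀ i, i ≠ m → a i ≠ 0 := by
      by_cases hex : ∃ m, a m = 0
      · obtain ⟨m, hm⟩ := hex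
        exact ⟨m, fun i hi hai => hi (hzero i m hai hm)⟩
      · exact ⟨0, fun i _ => not_exists.mp hex i⟩
    have hPc : P = P m m • 1 := calc
      P = diagonal P.diag := hdiag.diagonal_diag.symm
      _ = P m m • 1 := diagonal_eq_smul_one_of_commute m hm (by rwa [hdiag.diagonal_diag])
    have hidem : IsIdempotentElem (P m m) := by
      have := congr_fun₂ hPP m m
      rwa [hPc, smul_mul_smul, one_mul, Matrix.smul_apply, Matrix.smul_apply,
        one_apply_eq, smul_eq_mul, smul_eq_mul, mul_one, mul_one] at this
    rcases IsIdempotentElem.iff_eq_zero_or_one.mp hidem with h0 | h1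
    · exact absurd (by rw [hPc, h0, zero_smul]) hP0
    · exact absurd (by rw [hPc, h1, one_smul]) hP1
  · obtain ⟨i, j, hij, hPij⟩ : ∃ i j, i ≠ j ∧ P i j ≠ 0 := by
      simpa [IsDiag, Pairwise] using hdiag
    exact exists_periodicWeights_of_periodic (sub_ne_zero.mpr hij.symm)
      (periodic_norm_of_commute hPH hAP hzero hij hPij)

theorem matReducible_of_two_zeros {i j : Fin n} (hij : i ≠ j) (hi : a i = 0) (hj : a j = 0) :
    MatReducible (wsMatrix a) := by
  wlog hlt : i < j generalizing i j
  · exact this hij.symm hj hi (lt_of_le_of_ne (not_lt.mp hlt) hij.symm)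
  set χ : Fin n → ℂ := fun m => if i < m ∧ m ≤ j then 1 else 0
  have hχ : ∀ m, a m ≠ 0 → χ (m + 1) = χ m := by
    intro m ham
    have hmi : m.val ≠ i.val := Fin.val_ne_iff.mpr fun h => ham (h ▸ hi)
    have hmj : m.val ≠ j.val := Fin.val_ne_iff.mpr fun h => ham (h ▸ hj)
    have hv : ((m + 1 : Fin n) : ℕ) = if m.val + 1 = n then 0 else m.val + 1 := by
      split_ifs with hm
      · rw [Fin.val_add, Fin.val_one', Nat.add_mod_mod, hm, Nat.mod_self]
      · exact Fin.val_add_one_of_lt' (by omega)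
    simp only [χ, Fin.lt_def, Fin.le_def, hv]
    have := j.isLt
    split_ifs <;> first | rfl | omega
  refine ⟨diagonal χ, ?_, ?_, ?_, ?_, ?_⟩
  · rw [diagonal_mul_diagonal]
    congr 1
    funext m
    simp only [χ]
    split_ifs <;> simp
  · rw [diagonal_conjTranspose]
    congr 1
    funext m
    simp only [χ, Pi.star_apply]
    split_ifs <;> simp
  · intro h
    simpa [χ, hlt] using congr_fun₂ h j j
  · intro h
    simpa [χ] using congr_fun₂ h i i
  · rw [wsMatrix_eq_cycShift, ← cycShift_zero, cycShift_mul_cycShift,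
      cycShift_mul_cycShift, add_zero, zero_add]
    congr 1
    funext m
    by_cases ham : a m = 0
    · simp [ham]
    · rw [hχ m ham, add_zero, mul_comm]

end Reducible

section PeriodicWeights

variable {n : ℕ} [NeZero n] {a : Fin n → ℂ}

theorem exists_norm_one_commute_cycShift (ha : ∀ i, a i ≠ 0) {k : ℕ}
    (hper : Periodic (fun s => ‖a s‖) (k : Fin n)) :
    ∃ w : Fin n → ℂ, (∀ i, ‖w i‖ = 1) ∧ Commute (wsMatrix a) (cycShift k w) := by
  set q : Fin n → ℂ := fun i => ∏ t ∈ Finset.range k, a (i + (t : Fin n))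
  have hcomm : Commute (wsMatrix a) (cycShift k q) := wsMatrix_pow a k ▸ Commute.self_pow _ k
  have hstep : ∀ i, ‖q (i + 1)‖ = ‖q i‖ := fun i => by
    have h := congrArg norm (mul_apply_add_one_of_commute hcomm i (i + k))
    simp only [cycShift, of_apply, add_right_comm i (k : Fin n), if_true,
      norm_mul, hper i] at h
    rw [mul_comm] at h
    exact mul_right_cancel₀ (norm_ne_zero_iff.mpr (ha i)) h
  have hconst : ∀ i, ‖q i‖ = ‖q 0‖ :=
    Fin.forall_of_imp_add_one (p := fun i => ‖q i‖ = ‖q 0‖) (fun i hi => (hstep i).trans hi) rfl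
  have hq0 : ‖q 0‖ ≠ 0 := norm_ne_zero_iff.mpr (Finset.prod_ne_zero_iff.mpr fun t _ => ha _)
  refine ⟨(‖q 0‖ : ℂ)⁻¹ • q, fun i => ?_, ?_⟩
  · simp [hconst i, hq0]
  · rw [← smul_cycShift]
    exact hcomm.smul_right _

theorem matReducible_of_commute_cycShift (ha : ∀ i, a i ≠ 0) {k p : ℕ} (hkp : k * p = n)
    (hp : 2 ≤ p) {w : Fin n → ℂ} (hw : ∀ i, ‖w i‖ = 1)
    (hcomm : Commute (wsMatrix a) (cycShift k w)) : MatReducible (wsMatrix a) := by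
  set U := cycShift (k : Fin n) w
  have hp0 : p ≠ 0 := by omega
  have hk0 : 0 < k := Nat.pos_of_ne_zero fun hk => NeZero.ne n (by rw [← hkp, hk, zero_mul])
  have hnsmul : ∀ t, t • (k : Fin n) = ((t * k : ℕ) : Fin n) := fun t => by
    rw [nsmul_eq_mul]; push_cast; rfl
  have hUp : U ^ p = (∏ t ∈ Finset.range p, w (0 + t • (k : Fin n))) • 1 := by
    have hdiag : U ^ p =
        diagonal fun i => ∏ t ∈ Finset.range p, w (i + t • (k : Fin n)) := by
      rw [cycShift_pow, hnsmul, mul_comm, hkp, Fin.natCast_self, cycShift_zero]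
    rw [hdiag, diagonal_eq_smul_one_of_commute 0 (fun i _ => ha i) (hdiag ▸ hcomm.pow_right p)]
  obtain ⟨μ, hμU, hμp⟩ :=
    exists_smul_mem_unitary_pow_eq_one (cycShift_mem_unitaryGroup hw) hp0 hUp
  set P := (p : ℂ)⁻¹ • ∑ t ∈ Finset.range p, (μ • U) ^ t
  have hP := isStarProjection_smul_sum_pow hμU hp0 hμp
  have hP00 : P 0 0 = (p : ℂ)⁻¹ := by
    have hoff : ∀ t ∈ Finset.range p, t ≠ 0 → ((μ • U) ^ t) 0 0 = 0 := fun t ht ht0 => by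
      have htk : 0 < t * k ∧ t * k < n := by
        have := Finset.mem_range.mp ht
        constructor <;> nlinarith [Nat.pos_of_ne_zero ht0]
      rw [smul_cycShift, cycShift_pow, cycShift_apply_self]
      rw [hnsmul, Ne, Fin.natCast_eq_zero]
      exact fun hdvd => (Nat.eq_zero_of_dvd_of_lt hdvd htk.2).not_gt htk.1
    have h0 : 0 ∈ Finset.range p := Finset.mem_range.mpr (Nat.pos_of_ne_zero hp0)
    simp [P, Matrix.sum_apply, Finset.sum_eq_single_of_mem 0 h0 hoff]
  refine ⟨P, hP.isIdempotentElem.eq, hP.isSelfAdjoint.star_eq, fun h => ?_, fun h => ?_, ?_⟩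
  · simpa [hP00, hp0] using congr_fun₂ h 0 0
  · have h00 := congr_fun₂ h 0 0
    rw [hP00, one_apply_eq, inv_eq_one, Nat.cast_eq_one] at h00
    omega
  · exact ((Commute.sum_right _ _ _ fun t _ => (hcomm.smul_right μ).pow_right t).smul_right _)

theorem matReducible_of_periodicWeights {k : ℕ} (hk : PeriodicWeights n k a) :
    MatReducible (wsMatrix a) := by
  obtain ⟨hk1, hk2, hkn, hper⟩ := periodicWeights_iff.mp hk
  replace hper := (Fin.periodic_natCast_iff (fun s => ‖a s‖) k).mp hper
  have hn := Nat.pos_of_neZero n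
  rw [Nat.le_div_iff_mul_le two_pos] at hk2
  by_cases ha : ∀ i, a i ≠ 0
  · obtain ⟨w, hw, hcomm⟩ := exists_norm_one_commute_cycShift ha hper
    refine matReducible_of_commute_cycShift ha (Nat.mul_div_cancel' hkn) ?_ hw hcomm
    rw [Nat.le_div_iff_mul_le (by omega)]
    omega
  · obtain ⟨i, hi⟩ := not_forall_not.mp ha
    have hnk : ¬n ∣ k := fun hnk => by have := Nat.le_of_dvd (by omega) hnk; omega
    refine matReducible_of_two_zeros (j := i + k) (by simpa using hnk) hi ?_
    simpa [hi] using hper i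

end PeriodicWeights

theorem stmt13_general (n : ℕ) (a : Fin n → ℂ) :
    MatReducible (wsMatrix a) ↔
      ((∃ i j : Fin n, i < j ∧ a i = 0 ∧ a j = 0) ∨ ∃ k : ℕ, PeriodicWeights n k a) := by
  rcases Nat.eq_zero_or_pos n with rfl | hn
  · refine iff_of_false (fun ⟨P, _, _, hP0, _⟩ => hP0 (Subsingleton.elim _ _)) ?_
    rintro (⟨i, -⟩ | ⟨k, hk1, hk2, -⟩)
    exacts [i.elim0, by omega]
  have : NeZero n := ⟨hn.ne'⟩
  refine ⟨exists_zeros_or_periodicWeights_of_matReducible, ?_⟩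
  rintro (⟨i, j, hij, hi, hj⟩ | ⟨k, hk⟩)
  exacts [matReducible_of_two_zeros hij.ne hi hj, matReducible_of_periodicWeights hk]

theorem stmt13 (n : ℕ) (hn : 2 ≤ n) (a : Fin n → ℂ) :
    MatReducible (wsMatrix a) ↔
      ((∃ i j : Fin n, i < j ∧ a i = 0 ∧ a j = 0) ∨ ∃ k : ℕ, PeriodicWeights n k a) :=
  stmt13_general n a
end

section
/- For complex numbers a_1, …, a_n with n ≥ 5 and any integer r ≥ 2, the circularly symmetric functions satisfy S_r(a_1, …, a_n) = S_r(a_1, …, a_n, 0) − a_1·a_n·S_{r−2}(a_3, …, a_{n−2}, 0), where the three argument lists have lengths n, n+1, and n−3 respectively. -/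
/-- The circularly symmetric function `S_r(c_1, …, c_N)`: the sum, over all
`r`-element subsets of the cyclically ordered index set `{1, …, N}` containing
no two cyclically adjacent indices, of the products of the corresponding `c`'s.
(`S_0 = 1`, and `S_r = 0` when no such subset exists.) -/
noncomputable def Scirc {N : ℕ} (r : ℕ) (c : Fin N → ℂ) : ℂ :=
  ∑ s ∈ Finset.univ.filter
      (fun s : Finset (Fin N) =>
        s.card = r ∧ ∀ i ∈ s, ∀ j ∈ s, ((i : ℕ) + 1) % N ≠ (j : ℕ)),
    ∏ i ∈ s, c i
lemma Scirc_eq_natsum {N : ℕ} (r : ℕ) (c : Fin N → ℂ) (c' : ℕ → ℂ)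
    (hc : ∀ i : Fin N, c' (i : ℕ) = c i) :
    Scirc r c = ∑ s ∈ (Finset.range N).powerset.filter
      (fun s => s.card = r ∧ ∀ i ∈ s, ∀ j ∈ s, (i + 1) % N ≠ j),
      ∏ i ∈ s, c' i := by
  unfold Scirc
  refine Finset.sum_bij (fun s _ => s.image (Fin.val)) ?_ ?_ ?_ ?_
  · intro s hs
    simp only [Finset.mem_filter, Finset.mem_univ, true_and] at hs
    simp only [Finset.mem_filter, Finset.mem_powerset]
    refine ⟨?_, ?_, ?_⟩
    · intro x hx
      simp only [Finset.mem_image] at hx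
      obtain ⟨i, _, rfl⟩ := hx
      exact Finset.mem_range.2 i.isLt
    · rw [Finset.card_image_of_injective _ Fin.val_injective]; exact hs.1
    · intro x hx y hy
      simp only [Finset.mem_image] at hx hy
      obtain ⟨i, hi, rfl⟩ := hx
      obtain ⟨j, hj, rfl⟩ := hy
      exact hs.2 i hi j hj
  · intro s hs t ht h
    exact Finset.image_injective Fin.val_injective h
  · intro s hs
    simp only [Finset.mem_filter, Finset.mem_powerset] at hs
    refine ⟨Finset.univ.filter (fun i : Fin N => (i : ℕ) ∈ s), ?_, ?_⟩
    · simp only [Finset.mem_filter, Finset.mem_univ, true_and]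
      have himg : Finset.image Fin.val (Finset.univ.filter (fun i : Fin N => (i : ℕ) ∈ s)) = s := by
        ext x
        simp only [Finset.mem_image, Finset.mem_filter, Finset.mem_univ, true_and]
        constructor
        · rintro ⟨i, hi, rfl⟩; exact hi
        · intro hx
          have hxN : x < N := Finset.mem_range.1 (hs.1 hx)
          exact ⟨⟨x, hxN⟩, hx, rfl⟩
      constructor
      · have : (Finset.image Fin.val (Finset.univ.filter (fun i : Fin N => (i : ℕ) ∈ s))).card
            = (Finset.univ.filter (fun i : Fin N => (i : ℕ) ∈ s)).card :=
          Finset.card_image_of_injective _ Fin.val_injective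
        rw [himg] at this
        rw [← this, hs.2.1]
      · intro i hi j hj
        exact hs.2.2 _ hi _ hj
    · ext x
      simp only [Finset.mem_image, Finset.mem_filter, Finset.mem_univ, true_and]
      constructor
      · rintro ⟨i, hi, rfl⟩; exact hi
      · intro hx
        have hxN : x < N := Finset.mem_range.1 (hs.1 hx)
        exact ⟨⟨x, hxN⟩, hx, rfl⟩
  · intro s hs
    rw [Finset.prod_image (fun x _ y _ h => Fin.val_injective h)]
    exact Finset.prod_congr rfl (fun i _ => (hc i).symm)

lemma drop_last (m r : ℕ) (f : ℕ → ℂ) (hf : f m = 0) :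
    ∑ s ∈ (Finset.range (m+1)).powerset.filter
        (fun s => s.card = r ∧ ∀ i ∈ s, ∀ j ∈ s, (i + 1) % (m+1) ≠ j), ∏ i ∈ s, f i
    = ∑ s ∈ (Finset.range m).powerset.filter
        (fun s => s.card = r ∧ ∀ i ∈ s, ∀ j ∈ s, i + 1 ≠ j), ∏ i ∈ s, f i := by
  rw [← Finset.sum_filter_add_sum_filter_not ((Finset.range (m+1)).powerset.filter
        (fun s => s.card = r ∧ ∀ i ∈ s, ∀ j ∈ s, (i + 1) % (m+1) ≠ j)) (fun s => m ∈ s)]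
  have h1 : ∑ s ∈ (((Finset.range (m+1)).powerset.filter
        (fun s => s.card = r ∧ ∀ i ∈ s, ∀ j ∈ s, (i + 1) % (m+1) ≠ j)).filter
        (fun s => m ∈ s)), ∏ i ∈ s, f i = 0 := by
    refine Finset.sum_eq_zero (fun s hs => ?_)
    rw [Finset.mem_filter] at hs
    exact Finset.prod_eq_zero hs.2 hf
  rw [h1, zero_add]
  congr 1
  ext s
  simp only [Finset.mem_filter, Finset.mem_powerset]
  constructor
  · rintro ⟨⟨hsub, hcard, hcyc⟩, hm⟩
    refine ⟨?_, hcard, ?_⟩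
    · intro x hx
      have h1 := Finset.mem_range.1 (hsub hx)
      have h2 : x ≠ m := fun h => hm (h ▸ hx)
      exact Finset.mem_range.2 (by omega)
    · intro i hi j hj h
      have hiR := Finset.mem_range.1 (hsub hi)
      have h2 : i ≠ m := fun h => hm (h ▸ hi)
      exact hcyc i hi j hj (by rw [Nat.mod_eq_of_lt (by omega)]; exact h)
  · rintro ⟨hsub, hcard, hlin⟩
    have hm : m ∉ s := fun h => by
      have := Finset.mem_range.1 (hsub h); omega
    refine ⟨⟨fun x hx => Finset.mem_range.2 (by have := Finset.mem_range.1 (hsub hx); omega),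
      hcard, ?_⟩, hm⟩
    intro i hi j hj h
    have hiR := Finset.mem_range.1 (hsub hi)
    rw [Nat.mod_eq_of_lt (by omega)] at h
    exact hlin i hi j hj h

lemma cyc_eq_lin_sub (n r : ℕ) (hn : 2 ≤ n) (f : ℕ → ℂ) :
    ∑ s ∈ (Finset.range n).powerset.filter
        (fun s => s.card = r ∧ ∀ i ∈ s, ∀ j ∈ s, (i + 1) % n ≠ j), ∏ i ∈ s, f i
    = (∑ s ∈ (Finset.range n).powerset.filter
        (fun s => s.card = r ∧ ∀ i ∈ s, ∀ j ∈ s, i + 1 ≠ j), ∏ i ∈ s, f i)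
      - ∑ s ∈ ((Finset.range n).powerset.filter
        (fun s => s.card = r ∧ ∀ i ∈ s, ∀ j ∈ s, i + 1 ≠ j)).filter
        (fun s => 0 ∈ s ∧ n - 1 ∈ s), ∏ i ∈ s, f i := by
  set L := (Finset.range n).powerset.filter
        (fun s => s.card = r ∧ ∀ i ∈ s, ∀ j ∈ s, i + 1 ≠ j) with hL
  have hsplit := Finset.sum_filter_add_sum_filter_not L (fun s => 0 ∈ s ∧ n - 1 ∈ s)
    (fun s => ∏ i ∈ s, f i)
  have hset : L.filter (fun s => ¬(0 ∈ s ∧ n - 1 ∈ s))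
      = (Finset.range n).powerset.filter
        (fun s => s.card = r ∧ ∀ i ∈ s, ∀ j ∈ s, (i + 1) % n ≠ j) := by
    ext s
    simp only [hL, Finset.mem_filter, Finset.mem_powerset]
    constructor
    · rintro ⟨⟨hsub, hcard, hlin⟩, hnot⟩
      refine ⟨hsub, hcard, ?_⟩
      intro i hi j hj h
      have hiR := Finset.mem_range.1 (hsub hi)
      have hjR := Finset.mem_range.1 (hsub hj)
      by_cases hi1 : i + 1 < n
      · rw [Nat.mod_eq_of_lt hi1] at h
        exact hlin i hi j hj h
      · have hi1' : i = n - 1 := by omega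
        have hmod : (i + 1) % n = 0 := by
          have : i + 1 = n := by omega
          simp [this]
        rw [hmod] at h
        obtain rfl : j = 0 := h.symm
        rw [hi1'] at hi
        exact absurd ⟨hj, hi⟩ hnot
    · rintro ⟨hsub, hcard, hcyc⟩
      refine ⟨⟨hsub, hcard, ?_⟩, ?_⟩
      · intro i hi j hj h
        have hjR := Finset.mem_range.1 (hsub hj)
        exact hcyc i hi j hj (by rw [Nat.mod_eq_of_lt (by omega)]; exact h)
      · rintro ⟨h0, hn1⟩
        refine hcyc (n-1) hn1 0 h0 ?_
        have : n - 1 + 1 = n := by omega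
        simp [this]
  rw [← hset]
  linear_combination hsplit

lemma both_ends_sum (n r : ℕ) (hn : 5 ≤ n) (hr : 2 ≤ r) (f g : ℕ → ℂ)
    (hg : ∀ x, 2 ≤ x → x ≤ n - 3 → g (x - 2) = f x) :
    ∑ s ∈ ((Finset.range n).powerset.filter
        (fun s => s.card = r ∧ ∀ i ∈ s, ∀ j ∈ s, i + 1 ≠ j)).filter
        (fun s => 0 ∈ s ∧ n - 1 ∈ s), ∏ i ∈ s, f i
    = ∑ t ∈ (Finset.range (n-4)).powerset.filter
        (fun t => t.card = r - 2 ∧ ∀ i ∈ t, ∀ j ∈ t, i + 1 ≠ j),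
        f 0 * f (n-1) * ∏ i ∈ t, g i := by
  refine Finset.sum_nbij' (fun s => ((s.erase 0).erase (n-1)).image (· - 2))
    (fun t => insert 0 (insert (n-1) (t.image (· + 2)))) ?_ ?_ ?_ ?_ ?_
  · -- forward maps into target
    intro s hs
    simp only [Finset.mem_filter, Finset.mem_powerset] at hs
    obtain ⟨⟨hsub, hcard, hlin⟩, h0, hn1⟩ := hs
    have hmem : ∀ x ∈ (s.erase 0).erase (n-1), 2 ≤ x ∧ x ≤ n - 3 := by
      intro x hx
      rw [Finset.mem_erase, Finset.mem_erase] at hx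
      obtain ⟨hxn1, hx0, hxs⟩ := hx
      have hxn : x < n := Finset.mem_range.1 (hsub hxs)
      have hx1 : x ≠ 1 := by
        intro h; subst h; exact hlin 0 h0 1 hxs rfl
      have hx2 : x ≠ n - 2 := by
        intro h; subst h; exact hlin (n-2) hxs (n-1) hn1 (by omega)
      omega
    simp only [Finset.mem_filter, Finset.mem_powerset]
    refine ⟨?_, ?_, ?_⟩
    · intro y hy
      simp only [Finset.mem_image] at hy
      obtain ⟨x, hx, rfl⟩ := hy
      have := hmem x hx
      exact Finset.mem_range.2 (by omega)
    · rw [Finset.card_image_of_injOn (fun x hx y hy h => by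
        have h1 := hmem x hx; have h2 := hmem y hy; omega)]
      rw [Finset.card_erase_of_mem (Finset.mem_erase.2 ⟨by omega, hn1⟩),
        Finset.card_erase_of_mem h0, hcard]
      omega
    · intro y hy y' hy' h
      simp only [Finset.mem_image] at hy hy'
      obtain ⟨x, hx, rfl⟩ := hy
      obtain ⟨x', hx', rfl⟩ := hy'
      have h1 := hmem x hx
      have h2 := hmem x' hx'
      rw [Finset.mem_erase, Finset.mem_erase] at hx hx'
      exact hlin x hx.2.2 x' hx'.2.2 (by omega)
  · -- backward maps into source
    intro t ht
    simp only [Finset.mem_filter, Finset.mem_powerset] at ht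
    obtain ⟨hsub, hcard, hlin⟩ := ht
    have hrange : ∀ z ∈ t.image (· + 2), 2 ≤ z ∧ z ≤ n - 3 := by
      intro z hz
      simp only [Finset.mem_image] at hz
      obtain ⟨y, hy, rfl⟩ := hz
      have := Finset.mem_range.1 (hsub hy)
      omega
    have h0ni : (0:ℕ) ∉ insert (n-1) (t.image (· + 2)) := by
      simp only [Finset.mem_insert]
      rintro (h | h)
      · omega
      · have := hrange 0 h; omega
    have hn1ni : (n-1) ∉ t.image (· + 2) := by
      intro h; have := hrange (n-1) h; omega
    simp only [Finset.mem_filter, Finset.mem_powerset]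
    refine ⟨⟨?_, ?_, ?_⟩, ?_, ?_⟩
    · intro x hx
      simp only [Finset.mem_insert] at hx
      rcases hx with rfl | rfl | hx
      · exact Finset.mem_range.2 (by omega)
      · exact Finset.mem_range.2 (by omega)
      · have := hrange x hx; exact Finset.mem_range.2 (by omega)
    · rw [Finset.card_insert_of_notMem h0ni,
        Finset.card_insert_of_notMem hn1ni,
        Finset.card_image_of_injOn (fun x _ y _ h => by omega), hcard]
      omega
    · intro i hi j hj h
      simp only [Finset.mem_insert] at hi hj
      rcases hi with rfl | rfl | hi
      · rcases hj with rfl | hj | hj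
        · omega
        · omega
        · have := hrange j hj; omega
      · rcases hj with rfl | hj | hj
        · omega
        · omega
        · have := hrange _ hj; omega
      · simp only [Finset.mem_image] at hi
        obtain ⟨y, hy, rfl⟩ := hi
        have hyr := Finset.mem_range.1 (hsub hy)
        rcases hj with rfl | hj | hj
        · omega
        · omega
        · simp only [Finset.mem_image] at hj
          obtain ⟨y', hy', hj'⟩ := hj
          exact hlin y hy y' hy' (by omega)
    · exact Finset.mem_insert_self 0 _
    · exact Finset.mem_insert_of_mem (Finset.mem_insert_self _ _)
  · -- left inverse
    intro s hs
    simp only [Finset.mem_filter, Finset.mem_powerset] at hs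
    obtain ⟨⟨hsub, hcard, hlin⟩, h0, hn1⟩ := hs
    have hmem : ∀ x ∈ (s.erase 0).erase (n-1), 2 ≤ x ∧ x ≤ n - 3 := by
      intro x hx
      rw [Finset.mem_erase, Finset.mem_erase] at hx
      obtain ⟨hxn1, hx0, hxs⟩ := hx
      have hxn : x < n := Finset.mem_range.1 (hsub hxs)
      have hx1 : x ≠ 1 := by
        intro h; subst h; exact hlin 0 h0 1 hxs rfl
      have hx2 : x ≠ n - 2 := by
        intro h; subst h; exact hlin (n-2) hxs (n-1) hn1 (by omega)
      omega
    ext x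
    simp only [Finset.mem_insert, Finset.mem_image, Finset.mem_erase]
    constructor
    · rintro (rfl | rfl | ⟨y, ⟨z, hz, rfl⟩, rfl⟩)
      · exact h0
      · exact hn1
      · have := hmem z (Finset.mem_erase.2 ⟨hz.1, Finset.mem_erase.2 ⟨hz.2.1, hz.2.2⟩⟩)
        have hz2 : z - 2 + 2 = z := by omega
        rw [hz2]; exact hz.2.2
    · intro hx
      by_cases hx0 : x = 0
      · exact Or.inl hx0
      by_cases hxn1 : x = n - 1
      · exact Or.inr (Or.inl hxn1)
      refine Or.inr (Or.inr ⟨x - 2, ⟨x, ⟨hxn1, hx0, hx⟩, rfl⟩, ?_⟩)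
      have := hmem x (Finset.mem_erase.2 ⟨hxn1, Finset.mem_erase.2 ⟨hx0, hx⟩⟩)
      omega
  · -- right inverse
    intro t ht
    simp only [Finset.mem_filter, Finset.mem_powerset] at ht
    obtain ⟨hsub, hcard, hlin⟩ := ht
    ext y
    simp only [Finset.mem_image, Finset.mem_erase, Finset.mem_insert]
    constructor
    · rintro ⟨x, ⟨hxn1, hx0, (rfl | rfl | hx)⟩, rfl⟩
      · omega
      · omega
      · obtain ⟨z, hz, rfl⟩ := hx
        have : z + 2 - 2 = z := by omega
        rw [this]; exact hz
    · intro hy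
      have hyr := Finset.mem_range.1 (hsub hy)
      refine ⟨y + 2, ⟨by omega, by omega, Or.inr (Or.inr ?_)⟩, by omega⟩
      exact ⟨y, hy, rfl⟩
  · -- products agree
    intro s hs
    simp only [Finset.mem_filter, Finset.mem_powerset] at hs
    obtain ⟨⟨hsub, hcard, hlin⟩, h0, hn1⟩ := hs
    have hmem : ∀ x ∈ (s.erase 0).erase (n-1), 2 ≤ x ∧ x ≤ n - 3 := by
      intro x hx
      rw [Finset.mem_erase, Finset.mem_erase] at hx
      obtain ⟨hxn1, hx0, hxs⟩ := hx
      have hxn : x < n := Finset.mem_range.1 (hsub hxs)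
      have hx1 : x ≠ 1 := by
        intro h; subst h; exact hlin 0 h0 1 hxs rfl
      have hx2 : x ≠ n - 2 := by
        intro h; subst h; exact hlin (n-2) hxs (n-1) hn1 (by omega)
      omega
    rw [← Finset.mul_prod_erase s f h0,
      ← Finset.mul_prod_erase (s.erase 0) f (Finset.mem_erase.2 ⟨by omega, hn1⟩)]
    rw [Finset.prod_image (fun x hx y hy h => by
      have h1 := hmem x hx; have h2 := hmem y hy; omega)]
    rw [mul_assoc]
    congr 1
    congr 1
    exact Finset.prod_congr rfl (fun x hx => by
      have := hmem x hx
      exact (hg x this.1 this.2).symm)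

theorem stmt15 (n : ℕ) (hn : 5 ≤ n) (r : ℕ) (hr : 2 ≤ r) (a : Fin n → ℂ) :
    Scirc r a =
      Scirc r (fun i : Fin (n + 1) => if h : (i : ℕ) < n then a ⟨i, h⟩ else 0) -
        a ⟨0, by omega⟩ * a ⟨n - 1, by omega⟩ *
          Scirc (r - 2)
            (fun i : Fin (n - 3) =>
              if h : (i : ℕ) + 1 < n - 3 then a ⟨(i : ℕ) + 2, by omega⟩ else 0) := by
  set b : ℕ → ℂ := fun i => if h : i < n then a ⟨i, h⟩ else 0 with hbdef
  set d : ℕ → ℂ := fun i => if h : i + 2 < n - 2 then a ⟨i + 2, by omega⟩ else 0 with hddef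
  have hb1 : ∀ i : Fin n, b (i : ℕ) = a i := by
    intro i
    simp only [hbdef]
    rw [dif_pos i.isLt]
  have hb2 : ∀ i : Fin (n+1), b (i : ℕ)
      = (fun i : Fin (n+1) => if h : (i : ℕ) < n then a ⟨i, h⟩ else 0) i := fun i => rfl
  have hd : ∀ i : Fin (n-3), d (i : ℕ)
      = (fun i : Fin (n-3) => if h : (i : ℕ) + 1 < n - 3 then a ⟨(i : ℕ) + 2, by omega⟩ else 0) i := by
    intro i
    simp only [hddef]
    by_cases h : (i : ℕ) + 1 < n - 3
    · rw [dif_pos (by omega : (i : ℕ) + 2 < n - 2), dif_pos h]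
    · rw [dif_neg (by omega), dif_neg h]
  rw [Scirc_eq_natsum r a b hb1, Scirc_eq_natsum r _ b hb2, Scirc_eq_natsum (r-2) _ d hd]
  rw [show n - 3 = n - 4 + 1 from by omega]
  rw [drop_last (n-4) (r-2) d (by simp only [hddef]; rw [dif_neg (by omega)])]
  rw [drop_last n r b (by simp only [hbdef]; rw [dif_neg (by omega)])]
  rw [cyc_eq_lin_sub n r (by omega) b]
  rw [both_ends_sum n r hn hr b d (by
    intro x h2 h3
    simp only [hbdef, hddef]
    rw [dif_pos (by omega : x - 2 + 2 < n - 2), dif_pos (by omega : x < n)]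
    exact congrArg a (Fin.ext (show x - 2 + 2 = x by omega)))]
  rw [← Finset.mul_sum]
  have hb0 : b 0 = a ⟨0, by omega⟩ := by
    simp only [hbdef]; rw [dif_pos (by omega : (0:ℕ) < n)]
  have hbn1 : b (n-1) = a ⟨n-1, by omega⟩ := by
    simp only [hbdef]; rw [dif_pos (by omega : n - 1 < n)]
  rw [hb0, hbn1]
end
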